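/- arXiv:2408.00457 — 2 statements merged into one kernel-verified Lean document; each statement's English description precedes it below -/
import Mathlib

section
/- For every r ≥ 2 and every edge-ordering of the complete graph K_r, sat_m(n, e0 + K_r) = O(1), where e0 + K_r denotes the edge-ordered K_r together with a disjoint edge whose label is smaller than all labels of K_r. -/
open SimpleGraph

/-- `f` is a copy of the edge-ordered graph `(G, lG)` inside `(H, lH)`,
i.e. an injective graph homomorphism respecting the edge-order. -/
def IsEOCopy {W V : Type} (G : SimpleGraph W) (lG : Sym2 W → ℝ)
    (H : SimpleGraph V) (lH : Sym2 V → ℝ) (f : W → V) : Prop :=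
  Function.Injective f ∧
  (∀ u v : W, G.Adj u v → H.Adj (f u) (f v)) ∧
  ∀ e₁ ∈ G.edgeSet, ∀ e₂ ∈ G.edgeSet,
    (lG e₁ < lG e₂ ↔ lH (Sym2.map f e₁) < lH (Sym2.map f e₂))

/-- `(H, lH)` contains a copy of the edge-ordered graph `(G, lG)`. -/
def EOContains {V W : Type} (H : SimpleGraph V) (lH : Sym2 V → ℝ)
    (G : SimpleGraph W) (lG : Sym2 W → ℝ) : Prop :=
  ∃ f : W → V, IsEOCopy G lG H lH f

/-- `(H, lH)` contains a copy of `(G, lG)` that uses the edge `e₀`. -/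
def EOContainsVia {V W : Type} (H : SimpleGraph V) (lH : Sym2 V → ℝ)
    (G : SimpleGraph W) (lG : Sym2 W → ℝ) (e₀ : Sym2 V) : Prop :=
  ∃ f : W → V, IsEOCopy G lG H lH f ∧ ∃ e ∈ G.edgeSet, Sym2.map f e = e₀

/-- `H` sat_m-saturates `G`: `H` avoids `G`, and adding any new edge with a label
smaller than all labels of `H` creates a copy of `G`. -/
def SatMSat {V W : Type} [DecidableEq V] (H : SimpleGraph V) (lH : Sym2 V → ℝ)
    (G : SimpleGraph W) (lG : Sym2 W → ℝ) : Prop :=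
  ¬ EOContains H lH G lG ∧
  ∀ u v : V, u ≠ v → ¬ H.Adj u v → ∀ t : ℝ, (∀ e ∈ H.edgeSet, t < lH e) →
    EOContains (H ⊔ fromEdgeSet {s(u, v)})
      (fun e => if e = s(u, v) then t else lH e) G lG

/-- `H` ssat_m-semisaturates `G`: adding any new edge with a label smaller than all
labels of `H` creates a new copy of `G` (a copy using the new edge). -/
def SsatMSat {V W : Type} [DecidableEq V] (H : SimpleGraph V) (lH : Sym2 V → ℝ)
    (G : SimpleGraph W) (lG : Sym2 W → ℝ) : Prop :=
  ∀ u v : V, u ≠ v → ¬ H.Adj u v → ∀ t : ℝ, (∀ e ∈ H.edgeSet, t < lH e) →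
    EOContainsVia (H ⊔ fromEdgeSet {s(u, v)})
      (fun e => if e = s(u, v) then t else lH e) G lG s(u, v)

/-- `H` sat_e-saturates `G`: `H` avoids `G`, and adding any new edge with any new label
(inserted anywhere in the linear order of edges) creates a copy of `G`. -/
def SatESat {V W : Type} [DecidableEq V] (H : SimpleGraph V) (lH : Sym2 V → ℝ)
    (G : SimpleGraph W) (lG : Sym2 W → ℝ) : Prop :=
  ¬ EOContains H lH G lG ∧
  ∀ u v : V, u ≠ v → ¬ H.Adj u v → ∀ t : ℝ, (∀ e ∈ H.edgeSet, t ≠ lH e) →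
    EOContains (H ⊔ fromEdgeSet {s(u, v)})
      (fun e => if e = s(u, v) then t else lH e) G lG

/-- `H` ssat_e-semisaturates `G`: adding any new edge with any new label creates a
new copy of `G`. -/
def SsatESat {V W : Type} [DecidableEq V] (H : SimpleGraph V) (lH : Sym2 V → ℝ)
    (G : SimpleGraph W) (lG : Sym2 W → ℝ) : Prop :=
  ∀ u v : V, u ≠ v → ¬ H.Adj u v → ∀ t : ℝ, (∀ e ∈ H.edgeSet, t ≠ lH e) →
    EOContainsVia (H ⊔ fromEdgeSet {s(u, v)})
      (fun e => if e = s(u, v) then t else lH e) G lG s(u, v)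

/-- `H` ssat_s-semisaturates `G`: any new edge can be added with some new label so
that a new copy of `G` is created. -/
def SsatSSat {V W : Type} [DecidableEq V] (H : SimpleGraph V) (lH : Sym2 V → ℝ)
    (G : SimpleGraph W) (lG : Sym2 W → ℝ) : Prop :=
  ∀ u v : V, u ≠ v → ¬ H.Adj u v → ∃ t : ℝ, (∀ e ∈ H.edgeSet, t ≠ lH e) ∧
    EOContainsVia (H ⊔ fromEdgeSet {s(u, v)})
      (fun e => if e = s(u, v) then t else lH e) G lG s(u, v)

/-- `sat_m(n, G)`: minimum number of edges of an `n`-vertex sat_m-saturating graph. -/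
noncomputable def satM {W : Type} (G : SimpleGraph W) (lG : Sym2 W → ℝ) (n : ℕ) : ℕ :=
  sInf {m | ∃ (H : SimpleGraph (Fin n)) (lH : Sym2 (Fin n) → ℝ),
    Set.InjOn lH H.edgeSet ∧ SatMSat H lH G lG ∧ H.edgeSet.ncard = m}

/-- `ssat_m(n, G)`: minimum number of edges of an `n`-vertex ssat_m-semisaturating graph. -/
noncomputable def ssatM {W : Type} (G : SimpleGraph W) (lG : Sym2 W → ℝ) (n : ℕ) : ℕ :=
  sInf {m | ∃ (H : SimpleGraph (Fin n)) (lH : Sym2 (Fin n) → ℝ),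
    Set.InjOn lH H.edgeSet ∧ SsatMSat H lH G lG ∧ H.edgeSet.ncard = m}

/-- `sat_e(n, G)`: minimum number of edges of an `n`-vertex sat_e-saturating graph. -/
noncomputable def satE {W : Type} (G : SimpleGraph W) (lG : Sym2 W → ℝ) (n : ℕ) : ℕ :=
  sInf {m | ∃ (H : SimpleGraph (Fin n)) (lH : Sym2 (Fin n) → ℝ),
    Set.InjOn lH H.edgeSet ∧ SatESat H lH G lG ∧ H.edgeSet.ncard = m}

/-- `ssat_e(n, G)`: minimum number of edges of an `n`-vertex ssat_e-semisaturating graph. -/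
noncomputable def ssatE {W : Type} (G : SimpleGraph W) (lG : Sym2 W → ℝ) (n : ℕ) : ℕ :=
  sInf {m | ∃ (H : SimpleGraph (Fin n)) (lH : Sym2 (Fin n) → ℝ),
    Set.InjOn lH H.edgeSet ∧ SsatESat H lH G lG ∧ H.edgeSet.ncard = m}

/-- `ssat_s(n, G)`: minimum number of edges of an `n`-vertex ssat_s-semisaturating graph. -/
noncomputable def ssatS {W : Type} (G : SimpleGraph W) (lG : Sym2 W → ℝ) (n : ℕ) : ℕ :=
  sInf {m | ∃ (H : SimpleGraph (Fin n)) (lH : Sym2 (Fin n) → ℝ),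
    Set.InjOn lH H.edgeSet ∧ SsatSSat H lH G lG ∧ H.edgeSet.ncard = m}

namespace EOaux

noncomputable def sig (x : ℝ) : ℝ := Real.arctan x / 4 + 1/2

lemma sig_mono : StrictMono sig := fun a b h => by
  have := Real.arctan_strictMono h
  unfold sig; linarith

lemma sig_pos (x : ℝ) : 0 < sig x := by
  have h1 : -(Real.pi/2) < Real.arctan x := Real.neg_pi_div_two_lt_arctan x
  have h2 : Real.pi < 3.2 := by linarith [Real.pi_lt_d2]
  unfold sig; linarith

lemma sig_lt_one (x : ℝ) : sig x < 1 := by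
  have h1 : Real.arctan x < Real.pi/2 := Real.arctan_lt_pi_div_two x
  have h2 : Real.pi < 3.2 := by linarith [Real.pi_lt_d2]
  unfold sig; linarith
def tri : Fin 6 → Fin 3 × Fin 3 := ![(0,1),(0,1),(1,2),(1,2),(0,2),(0,2)]
def dInt : Fin 6 → ℤ := ![-3,-3,-2,-2,-1,-1]
lemma tri_ne : ∀ k, (tri k).1 ≠ (tri k).2 := by decide
lemma tri_cover : ∀ i j : Fin 3, i ≠ j → ∃ k, ((tri k).1 = i ∧ (tri k).2 = j) ∨
    ((tri k).1 = j ∧ (tri k).2 = i) := by decide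
def c1 : Fin 3 → Fin 6 := ![2,4,0]
def c2 : Fin 3 → Fin 6 := ![3,5,1]
def other : Fin 6 → Fin 6 := fun k => if k = 0 then 1 else 0
def pick3 : Fin 6 → Fin 6 → Fin 6 := fun a b =>
  if a = 0 then (if b = 1 then 2 else 1) else if b = 0 then (if a = 1 then 2 else 1) else 0
lemma c_avoid : ∀ i : Fin 3, (tri (c1 i)).1 ≠ i ∧ (tri (c1 i)).2 ≠ i ∧
    (tri (c2 i)).1 ≠ i ∧ (tri (c2 i)).2 ≠ i ∧ c1 i ≠ c2 i := by decide
lemma other_ne : ∀ k, other k ≠ k := by decide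
lemma pick3_ne : ∀ a b, pick3 a b ≠ a ∧ pick3 a b ≠ b := by decide
lemma tri_meet' : ∀ k k', ∃ i : Fin 3, ((tri k).1 = i ∨ (tri k).2 = i) ∧
    ((tri k').1 = i ∨ (tri k').2 = i) := by decide
lemma dInt_le : ∀ k, dInt k ≤ -1 := by decide
lemma tri_of_d : ∀ k k', dInt k = dInt k' → tri k = tri k' := by decide
lemma d_of_tri : ∀ k k', ((tri k).1 = (tri k').1 ∧ (tri k).2 = (tri k').2) ∨
    ((tri k).1 = (tri k').2 ∧ (tri k).2 = (tri k').1) → dInt k = dInt k' := by decide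

section
open scoped Classical in
noncomputable def lab {W : Type} (p q : W) (lK : Sym2 W → ℝ) (k : Fin 6) (e : Sym2 W) : ℝ :=
  if e = s(p, q) then (dInt k : ℝ) else ((k : ℕ) : ℝ) + 1 + sig (lK e)

variable {W : Type} [DecidableEq W] {p q : W} {n : ℕ}
  (ι : (Fin 3 ⊕ (Fin 6 × {w : W // w ≠ p ∧ w ≠ q})) ↪ Fin n)

def fmap (k : Fin 6) (w : W) : Fin n :=
  if h1 : w = p then ι (Sum.inl (tri k).1)
  else if h2 : w = q then ι (Sum.inl (tri k).2)
  else ι (Sum.inr (k, ⟨w, h1, h2⟩))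

lemma fmap_p (k : Fin 6) : fmap ι k p = ι (Sum.inl (tri k).1) := dif_pos rfl

lemma fmap_q (hpq : p ≠ q) (k : Fin 6) : fmap ι k q = ι (Sum.inl (tri k).2) := by
  rw [fmap, dif_neg (Ne.symm hpq), dif_pos rfl]

lemma fmap_priv {w : W} (h1 : w ≠ p) (h2 : w ≠ q) (k : Fin 6) :
    fmap ι k w = ι (Sum.inr (k, ⟨w, h1, h2⟩)) := by
  rw [fmap, dif_neg h1, dif_neg h2]

/-- if `fmap k w` is a triangle vertex then `w ∈ {p,q}` -/
lemma fmap_tri_cases (k : Fin 6) (w : W) :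
    (w = p ∧ fmap ι k w = ι (Sum.inl (tri k).1)) ∨
    (w = q ∧ fmap ι k w = ι (Sum.inl (tri k).2)) ∨
    (∃ h1 : w ≠ p, ∃ h2 : w ≠ q, fmap ι k w = ι (Sum.inr (k, ⟨w, h1, h2⟩))) := by
  by_cases h1 : w = p
  · subst h1; exact Or.inl ⟨rfl, fmap_p ι k⟩
  by_cases h2 : w = q
  · subst h2; exact Or.inr (Or.inl ⟨rfl, by rw [fmap, dif_neg h1, dif_pos rfl]⟩)
  · exact Or.inr (Or.inr ⟨h1, h2, fmap_priv ι h1 h2 k⟩)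

lemma fmap_eq_fmap {k k' : Fin 6} {w w' : W}
    (h : fmap ι k w = fmap ι k' w') :
    ((w = p ∨ w = q) ∧ (w' = p ∨ w' = q)) ∨ (k = k' ∧ w = w') := by
  rcases fmap_tri_cases ι k w with ⟨e1, e2⟩ | ⟨e1, e2⟩ | ⟨h1, h2, e2⟩ <;>
    rcases fmap_tri_cases ι k' w' with ⟨f1, f2⟩ | ⟨f1, f2⟩ | ⟨g1, g2, f2⟩ <;>
      rw [e2, f2] at h
  · exact Or.inl ⟨Or.inl e1, Or.inl f1⟩
  · exact Or.inl ⟨Or.inl e1, Or.inr f1⟩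
  · exact absurd (ι.injective h) (by simp)
  · exact Or.inl ⟨Or.inr e1, Or.inl f1⟩
  · exact Or.inl ⟨Or.inr e1, Or.inr f1⟩
  · exact absurd (ι.injective h) (by simp)
  · exact absurd (ι.injective h) (by simp)
  · exact absurd (ι.injective h) (by simp)
  · have := ι.injective h
    simp only [Sum.inr.injEq, Prod.mk.injEq, Subtype.mk.injEq] at this
    exact Or.inr ⟨this.1, this.2⟩

lemma fmap_inj (hpq : p ≠ q) (k : Fin 6) : Function.Injective (fmap ι k) := by
  intro a b h
  rcases fmap_eq_fmap ι h with ⟨ha, hb⟩ | ⟨_, hab⟩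
  · rcases ha with rfl | rfl <;> rcases hb with rfl | rfl <;> try rfl
    · rw [fmap_p, fmap_q ι hpq] at h
      exact absurd (by simpa using ι.injective h) (tri_ne k)
    · rw [fmap_p, fmap_q ι hpq] at h
      exact absurd (by simpa using ι.injective h.symm) (tri_ne k)
  · exact hab


/-- The edge set of the construction. -/
def SE : Set (Sym2 (Fin n)) :=
  {e | ∃ k e', e' ∈ (⊤ : SimpleGraph W).edgeSet ∧ Sym2.map (fmap ι k) e' = e}

def Hgr : SimpleGraph (Fin n) := fromEdgeSet (SE ι)

open scoped Classical in
noncomputable def lH (lK : Sym2 W → ℝ) : Sym2 (Fin n) → ℝ := fun e =>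
  if h : ∃ x : Fin 6 × Sym2 W, x.2 ∈ (⊤ : SimpleGraph W).edgeSet ∧
      Sym2.map (fmap ι x.1) x.2 = e then
    lab p q lK h.choose.1 h.choose.2
  else 37

/-- a non-diagonal `e ≠ s(p,q)` has a representative whose first coordinate avoids `p,q`. -/
lemma exists_rep_private {e : Sym2 W} (he : e ∈ (⊤ : SimpleGraph W).edgeSet)
    (hne : e ≠ s(p, q)) : ∃ c d, e = s(c, d) ∧ c ≠ d ∧ c ≠ p ∧ c ≠ q := by
  induction e with
  | _ c d =>
    rw [SimpleGraph.mem_edgeSet] at he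
    have hcd : c ≠ d := by simpa using he.ne
    by_cases h1 : c = p
    · subst h1
      by_cases h2 : d = q
      · subst h2; exact absurd rfl hne
      · refine ⟨d, c, Sym2.eq_swap, hcd.symm, fun hh => ?_, h2⟩
        subst hh; exact hcd rfl
    · by_cases h2 : c = q
      · subst h2
        by_cases h3 : d = p
        · subst h3; exact absurd Sym2.eq_swap hne
        · exact ⟨d, c, Sym2.eq_swap, hcd.symm, h3, fun hh => hcd (by rw [hh])⟩
      · exact ⟨c, d, rfl, hcd, h1, h2⟩

lemma lab_welldef (hpq : p ≠ q) (lK : Sym2 W → ℝ) {k k' : Fin 6} {e e' : Sym2 W}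
    (he : e ∈ (⊤ : SimpleGraph W).edgeSet) (he' : e' ∈ (⊤ : SimpleGraph W).edgeSet)
    (h : Sym2.map (fmap ι k) e = Sym2.map (fmap ι k') e') :
    lab p q lK k e = lab p q lK k' e' := by
  by_cases h1 : e = s(p, q) <;> by_cases h2 : e' = s(p, q)
  · subst h1; subst h2
    rw [Sym2.map_pair_eq, Sym2.map_pair_eq, fmap_p, fmap_p, fmap_q ι hpq, fmap_q ι hpq,
      Sym2.eq_iff] at h
    have : ((tri k).1 = (tri k').1 ∧ (tri k).2 = (tri k').2) ∨
        ((tri k).1 = (tri k').2 ∧ (tri k).2 = (tri k').1) := by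
      rcases h with ⟨ha, hb⟩ | ⟨ha, hb⟩
      · exact Or.inl ⟨by simpa using ι.injective ha, by simpa using ι.injective hb⟩
      · exact Or.inr ⟨by simpa using ι.injective ha, by simpa using ι.injective hb⟩
    rw [lab, lab, if_pos rfl, if_pos rfl, d_of_tri k k' this]
  · -- e = pq, e' has a private endpoint: impossible
    exfalso
    subst h1
    obtain ⟨c, d, rfl, hcd, hc1, hc2⟩ := exists_rep_private he' h2
    rw [Sym2.map_pair_eq, Sym2.map_pair_eq, fmap_p, fmap_q ι hpq,
      fmap_priv ι hc1 hc2, Sym2.eq_iff] at h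
    rcases h with ⟨ha, _⟩ | ⟨_, hb⟩
    · exact absurd (ι.injective ha) (by simp)
    · exact absurd (ι.injective hb.symm) (by simp)
  · exfalso
    subst h2
    obtain ⟨c, d, rfl, hcd, hc1, hc2⟩ := exists_rep_private he h1
    rw [Sym2.map_pair_eq, Sym2.map_pair_eq, fmap_p, fmap_q ι hpq,
      fmap_priv ι hc1 hc2, Sym2.eq_iff] at h
    rcases h with ⟨ha, _⟩ | ⟨ha, hb⟩
    · exact absurd (ι.injective ha) (by simp)
    · exact absurd (ι.injective ha) (by simp)
  · obtain ⟨c, d, rfl, hcd, hc1, hc2⟩ := exists_rep_private he h1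
    obtain ⟨c', d', rfl, hcd', hc1', hc2'⟩ := exists_rep_private he' h2
    have hkk : k = k' := by
      rw [Sym2.map_pair_eq, Sym2.map_pair_eq, Sym2.eq_iff] at h
      rcases h with ⟨ha, _⟩ | ⟨ha, _⟩ <;>
      · rcases fmap_eq_fmap ι ha with ⟨hh | hh, _⟩ | ⟨hk, _⟩
        · exact absurd hh hc1
        · exact absurd hh hc2
        · exact hk
    subst hkk
    have := Sym2.map.injective (fmap_inj ι hpq k) h
    rw [this]

lemma lH_map (hpq : p ≠ q) (lK : Sym2 W → ℝ) (k : Fin 6) {e : Sym2 W}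
    (he : e ∈ (⊤ : SimpleGraph W).edgeSet) :
    lH ι lK (Sym2.map (fmap ι k) e) = lab p q lK k e := by
  have hex : ∃ x : Fin 6 × Sym2 W, x.2 ∈ (⊤ : SimpleGraph W).edgeSet ∧
      Sym2.map (fmap ι x.1) x.2 = Sym2.map (fmap ι k) e := ⟨(k, e), he, rfl⟩
  rw [lH, dif_pos hex]
  exact lab_welldef ι hpq lK hex.choose_spec.1 he hex.choose_spec.2

lemma SE_nondiag {e : Sym2 (Fin n)} (hpq : p ≠ q) (he : e ∈ SE ι) : ¬ e.IsDiag := by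
  obtain ⟨k, e', he', rfl⟩ := he
  induction e' with
  | _ c d =>
    rw [SimpleGraph.mem_edgeSet] at he'
    have hcd : c ≠ d := by simpa using he'.ne
    rw [Sym2.map_pair_eq]
    simpa using fun hh => hcd (fmap_inj ι hpq k hh)

lemma Hgr_edgeSet (hpq : p ≠ q) : (Hgr ι).edgeSet = SE ι := by
  rw [Hgr, edgeSet_fromEdgeSet]
  ext e
  exact ⟨fun h => h.1, fun h => ⟨h, SE_nondiag ι hpq h⟩⟩

lemma Hgr_adj {u v : Fin n} : (Hgr ι).Adj u v ↔ s(u, v) ∈ SE ι ∧ u ≠ v := by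
  rw [Hgr]; exact fromEdgeSet_adj _


lemma lab_pq (lK : Sym2 W → ℝ) (k : Fin 6) : lab p q lK k s(p, q) = (dInt k : ℝ) := if_pos rfl

lemma lab_ne_eq (lK : Sym2 W → ℝ) (k : Fin 6) {e : Sym2 W} (hne : e ≠ s(p, q)) :
    lab p q lK k e = ((k : ℕ) : ℝ) + 1 + sig (lK e) := if_neg hne

lemma lab_ne_ge (lK : Sym2 W → ℝ) (k : Fin 6) {e : Sym2 W} (hne : e ≠ s(p, q)) :
    1 < lab p q lK k e := by
  rw [lab_ne_eq lK k hne]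
  have := sig_pos (lK e)
  have : (0 : ℝ) ≤ ((k : ℕ) : ℝ) := Nat.cast_nonneg _
  linarith [sig_pos (lK e)]

lemma lab_pq_le (lK : Sym2 W → ℝ) (k : Fin 6) : lab p q lK k s(p, q) ≤ -1 := by
  rw [lab_pq]
  exact_mod_cast dInt_le k

lemma lab_lt (lK : Sym2 W → ℝ)
    (hmin : ∀ e ∈ (⊤ : SimpleGraph W).edgeSet, e ≠ s(p, q) → lK s(p, q) < lK e)
    (k : Fin 6) {e e' : Sym2 W} (he : e ∈ (⊤ : SimpleGraph W).edgeSet)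
    (he' : e' ∈ (⊤ : SimpleGraph W).edgeSet) :
    lK e < lK e' ↔ lab p q lK k e < lab p q lK k e' := by
  by_cases h1 : e = s(p, q) <;> by_cases h2 : e' = s(p, q)
  · subst h1; subst h2; simp
  · subst h1
    simp only [hmin e' he' h2, true_iff]
    calc lab p q lK k s(p,q) ≤ -1 := lab_pq_le lK k
    _ < 1 := by norm_num
    _ < _ := lab_ne_ge lK k h2
  · subst h2
    constructor
    · intro hh; exact absurd (hmin e he h1) (lt_asymm hh)
    · intro hh
      exact absurd ((lab_pq_le lK k).trans_lt ((by norm_num : (-1:ℝ) < 1).trans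
        (lab_ne_ge lK k h1))) (lt_asymm hh)
  · rw [lab_ne_eq lK k h1, lab_ne_eq lK k h2]
    constructor
    · intro hh; have := sig_mono hh; linarith
    · intro hh
      have : sig (lK e) < sig (lK e') := by linarith
      exact sig_mono.lt_iff_lt.1 this

lemma nat_eq_of_abs_lt {a b : ℕ} (h : |(a : ℝ) - (b : ℝ)| < 1) : a = b := by
  rw [abs_lt] at h
  have h1 : ((a : ℤ) : ℝ) - ((b : ℤ) : ℝ) < 1 := by push_cast; push_cast at h; linarith [h.2]
  have h2 : (-1 : ℝ) < ((a : ℤ) : ℝ) - ((b : ℤ) : ℝ) := by push_cast; push_cast at h; linarith [h.1]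
  have : (a : ℤ) = (b : ℤ) := by
    have := (by exact_mod_cast h1 : ((a : ℤ) - b : ℤ) < 1)
    have := (by exact_mod_cast h2 : (-1 : ℤ) < ((a : ℤ) - b : ℤ))
    omega
  exact_mod_cast this

lemma lab_inj (lK : Sym2 W → ℝ) (hinjK : Set.InjOn lK (⊤ : SimpleGraph W).edgeSet)
    {k k' : Fin 6} {e e' : Sym2 W} (he : e ∈ (⊤ : SimpleGraph W).edgeSet)
    (he' : e' ∈ (⊤ : SimpleGraph W).edgeSet)
    (h : lab p q lK k e = lab p q lK k' e') :
    Sym2.map (fmap ι k) e = Sym2.map (fmap ι k') e' := by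
  by_cases h1 : e = s(p, q) <;> by_cases h2 : e' = s(p, q)
  · subst h1; subst h2
    rw [lab_pq, lab_pq] at h
    have : dInt k = dInt k' := by exact_mod_cast h
    have htri := tri_of_d k k' this
    have hpq : p ≠ q := by simpa using he
    rw [Sym2.map_pair_eq, Sym2.map_pair_eq, fmap_p, fmap_p, fmap_q ι hpq, fmap_q ι hpq, htri]
  · exfalso
    have := lab_pq_le (p := p) (q := q) lK k
    have := lab_ne_ge (p := p) (q := q) lK k' h2
    rw [h1] at h; linarith
  · exfalso
    have := lab_pq_le (p := p) (q := q) lK k'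
    have := lab_ne_ge (p := p) (q := q) lK k h1
    rw [h2] at h; linarith
  · rw [lab_ne_eq lK k h1, lab_ne_eq lK k' h2] at h
    have hs : 0 < sig (lK e) ∧ sig (lK e) < 1 := ⟨sig_pos _, sig_lt_one _⟩
    have hs' : 0 < sig (lK e') ∧ sig (lK e') < 1 := ⟨sig_pos _, sig_lt_one _⟩
    have hk : (k : ℕ) = (k' : ℕ) := by
      apply nat_eq_of_abs_lt
      rw [abs_lt]
      constructor <;> linarith [hs.1, hs.2, hs'.1, hs'.2]
    have hk2 : k = k' := Fin.ext hk
    subst hk2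
    have : sig (lK e) = sig (lK e') := by linarith
    have : lK e = lK e' := sig_mono.injective this
    rw [hinjK he he' this]


/-- if `fmap ι k c` is a private vertex of copy `k0`, then `k = k0`. -/
lemma priv_k {k k0 : Fin 6} {w0 : {w : W // w ≠ p ∧ w ≠ q}} {c : W}
    (h : fmap ι k c = ι (Sum.inr (k0, w0))) : k = k0 := by
  rcases fmap_tri_cases ι k c with ⟨_, h2⟩ | ⟨_, h2⟩ | ⟨h1', h2', h2⟩ <;> rw [h2] at h
  · exact absurd (ι.injective h) (by simp)
  · exact absurd (ι.injective h) (by simp)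
  · have := ι.injective h
    simp only [Sum.inr.injEq, Prod.mk.injEq] at this
    exact this.1

section NoF
variable [Fintype W] {F : SimpleGraph (W ⊕ Fin 2)} {lF : Sym2 (W ⊕ Fin 2) → ℝ}
  {lK : Sym2 W → ℝ}

lemma inl_mem_F (hF₁ : ∀ x y : W, F.Adj (Sum.inl x) (Sum.inl y) ↔ x ≠ y)
    {e : Sym2 W} (he : e ∈ (⊤ : SimpleGraph W).edgeSet) :
    Sym2.map Sum.inl e ∈ F.edgeSet := by
  induction e with
  | _ c d =>
    rw [SimpleGraph.mem_edgeSet] at he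
    rw [Sym2.map_pair_eq, SimpleGraph.mem_edgeSet]
    exact (hF₁ c d).2 (by simpa using he.ne)

lemma noF (hcard : 2 ≤ Fintype.card W) (hpq : p ≠ q)
    (hF₁ : ∀ x y : W, F.Adj (Sum.inl x) (Sum.inl y) ↔ x ≠ y)
    (hF₂ : ∀ x y : Fin 2, F.Adj (Sum.inr x) (Sum.inr y) ↔ x ≠ y)
    (hFl : ∀ e : Sym2 W, lF (Sym2.map Sum.inl e) = lK e)
    (hFmin : ∀ e ∈ (⊤ : SimpleGraph W).edgeSet,
      lF s(Sum.inr (0 : Fin 2), Sum.inr (1 : Fin 2)) < lK e) :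
    ¬ EOContains (Hgr ι) (lH ι lK) F lF := by
  rintro ⟨φ, hinjφ, hadj, hord⟩
  set g : W → Fin n := φ ∘ Sum.inl with hg
  have hginj : Function.Injective g := fun a b h => Sum.inl.inj (hinjφ h)
  have he₀mem : s(Sum.inr (0 : Fin 2), Sum.inr (1 : Fin 2)) ∈ F.edgeSet :=
    F.mem_edgeSet.2 ((hF₂ 0 1).2 (by decide))
  have henew : (Hgr ι).Adj (φ (Sum.inr 0)) (φ (Sum.inr 1)) :=
    hadj _ _ ((hF₂ 0 1).2 (by decide))
  set τ : ℝ := lH ι lK s(φ (Sum.inr 0), φ (Sum.inr 1)) with hτ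
  have maincomp : ∀ e ∈ (⊤ : SimpleGraph W).edgeSet, τ < lH ι lK (Sym2.map g e) := by
    intro e he
    have h1 := (hord _ he₀mem _ (inl_mem_F hF₁ he)).1
    rw [hFl e] at h1
    have h2 := h1 (hFmin e he)
    rw [Sym2.map_pair_eq, Sym2.map_map] at h2
    rwa [← hg] at h2
  have hSE : ∀ a b : W, a ≠ b → s(g a, g b) ∈ SE ι := by
    intro a b hab
    exact ((Hgr_adj ι).1 (hadj _ _ ((hF₁ a b).2 hab))).1
  have key : ∃ (a₀ b₀ : W) (k₀ : Fin 6), a₀ ≠ b₀ ∧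
      s(g a₀, g b₀) = Sym2.map (fmap ι k₀) s(p, q) := by
    by_cases hpriv : ∃ (a : W) (k : Fin 6) (w : {w : W // w ≠ p ∧ w ≠ q}),
        g a = ι (Sum.inr (k, w))
    · obtain ⟨a, k0, w0, ha⟩ := hpriv
      have step1 : ∀ b : W, ∃ w : W, fmap ι k0 w = g b := by
        intro b
        by_cases hb : b = a
        · subst hb
          exact ⟨w0.val, by rw [fmap_priv ι w0.2.1 w0.2.2, ha]⟩
        · obtain ⟨k, e', he', heq⟩ := hSE b a hb
          induction e' with
          | _ c d =>
            rw [Sym2.map_pair_eq, Sym2.eq_iff] at heq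
            rcases heq with ⟨h1, h2⟩ | ⟨h1, h2⟩
            · rw [ha] at h2
              exact ⟨c, by rw [priv_k ι h2] at h1; exact h1⟩
            · rw [ha] at h1
              exact ⟨d, by rw [priv_k ι h1] at h2; exact h2⟩
      have hsub : Set.range g ⊆ Set.range (fmap ι k0) := by
        rintro _ ⟨b, rfl⟩; exact step1 b
      have hcardg : (Set.range g).ncard = Nat.card W := by
        rw [← Set.image_univ, Set.ncard_image_of_injective _ hginj, Set.ncard_univ]
      have hcardf : (Set.range (fmap ι k0)).ncard = Nat.card W := by
        rw [← Set.image_univ, Set.ncard_image_of_injective _ (fmap_inj ι hpq k0),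
          Set.ncard_univ]
      have hEq : Set.range g = Set.range (fmap ι k0) :=
        Set.eq_of_subset_of_ncard_le hsub (by rw [hcardg, hcardf]) (Set.finite_range _)
      obtain ⟨a₀, ha₀⟩ : fmap ι k0 p ∈ Set.range g := by
        rw [hEq]; exact Set.mem_range_self p
      obtain ⟨b₀, hb₀⟩ : fmap ι k0 q ∈ Set.range g := by
        rw [hEq]; exact Set.mem_range_self q
      refine ⟨a₀, b₀, k0, ?_, ?_⟩
      · intro h
        apply hpq
        apply fmap_inj ι hpq k0
        rw [← ha₀, ← hb₀, h]
      · rw [Sym2.map_pair_eq, ha₀, hb₀]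
    · push_neg at hpriv
      have htri : ∀ a : W, ∃ i : Fin 3, g a = ι (Sum.inl i) := by
        intro a
        obtain ⟨b, hb⟩ := Fintype.exists_ne_of_one_lt_card (by omega) a
        obtain ⟨k, e', he', heq⟩ := hSE a b (Ne.symm hb)
        induction e' with
        | _ c d =>
          rw [Sym2.map_pair_eq, Sym2.eq_iff] at heq
          have pick : ∀ x : W, fmap ι k x = g a → ∃ i : Fin 3, g a = ι (Sum.inl i) := by
            intro x hx
            rcases fmap_tri_cases ι k x with ⟨_, h2⟩ | ⟨_, h2⟩ | ⟨h1', h2', h2⟩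
            · exact ⟨(tri k).1, by rw [← hx, h2]⟩
            · exact ⟨(tri k).2, by rw [← hx, h2]⟩
            · exact absurd (hx.symm.trans h2) (hpriv a k ⟨x, h1', h2'⟩)
          rcases heq with ⟨h1, _⟩ | ⟨_, h2⟩
          · exact pick c h1
          · exact pick d h2
      obtain ⟨k₀, e', he', heq⟩ := hSE p q hpq
      have he'pq : e' = s(p, q) := by
        by_contra hne
        obtain ⟨c, d, rfl, hcd, hc1, hc2⟩ := exists_rep_private he' hne
        rw [Sym2.map_pair_eq, fmap_priv ι hc1 hc2] at heq
        obtain ⟨i, hi⟩ := htri p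
        obtain ⟨j, hj⟩ := htri q
        rw [hi, hj, Sym2.eq_iff] at heq
        rcases heq with ⟨h1, _⟩ | ⟨h1, _⟩ <;> exact absurd (ι.injective h1) (by simp)
      exact ⟨p, q, k₀, hpq, by rw [← he'pq, heq]⟩
  obtain ⟨a₀, b₀, k₀, hab, hkey⟩ := key
  have hpqe : s(p, q) ∈ (⊤ : SimpleGraph W).edgeSet := by
    rw [SimpleGraph.mem_edgeSet]; simpa using hpq
  have h1 : τ < (dInt k₀ : ℝ) := by
    have h := maincomp s(a₀, b₀) (by rw [SimpleGraph.mem_edgeSet]; simpa using hab)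
    rwa [Sym2.map_pair_eq, hkey, lH_map ι hpq lK k₀ hpqe, lab_pq] at h
  obtain ⟨⟨k1, e'', he'', heq1⟩, _⟩ := (Hgr_adj ι).1 henew
  have hτe : τ = lab p q lK k1 e'' := by rw [hτ, ← heq1, lH_map ι hpq lK k1 he'']
  have he''pq : e'' = s(p, q) := by
    by_contra hne
    have hgt := lab_ne_ge (p := p) (q := q) lK k1 hne
    have hd : (dInt k₀ : ℝ) ≤ -1 := by exact_mod_cast dInt_le k₀
    linarith [hτe ▸ h1]
  subst he''pq
  rw [Sym2.map_pair_eq, fmap_p, fmap_q ι hpq] at heq1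
  rw [Sym2.map_pair_eq, fmap_p, fmap_q ι hpq] at hkey
  obtain ⟨i, hik1, hik0⟩ := tri_meet' k1 k₀
  have hx : ∃ x : Fin 2, φ (Sum.inr x) = ι (Sum.inl i) := by
    rw [Sym2.eq_iff] at heq1
    rcases heq1 with ⟨h1, h2⟩ | ⟨h1, h2⟩ <;> rcases hik1 with h | h
    · exact ⟨0, by rw [← h1, h]⟩
    · exact ⟨1, by rw [← h2, h]⟩
    · exact ⟨1, by rw [← h1, h]⟩
    · exact ⟨0, by rw [← h2, h]⟩
  have hc : ∃ c : W, φ (Sum.inl c) = ι (Sum.inl i) := by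
    rw [Sym2.eq_iff] at hkey
    rcases hkey with ⟨h1, h2⟩ | ⟨h1, h2⟩ <;> rcases hik0 with h | h
    · exact ⟨a₀, by rw [show φ (Sum.inl a₀) = g a₀ from rfl, h1, h]⟩
    · exact ⟨b₀, by rw [show φ (Sum.inl b₀) = g b₀ from rfl, h2, h]⟩
    · exact ⟨b₀, by rw [show φ (Sum.inl b₀) = g b₀ from rfl, h2, h]⟩
    · exact ⟨a₀, by rw [show φ (Sum.inl a₀) = g a₀ from rfl, h1, h]⟩
  obtain ⟨x, hxe⟩ := hx
  obtain ⟨c, hce⟩ := hc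
  exact absurd (hinjφ (hxe.trans hce.symm)) (by simp)

end NoF

section Sat

/-- `ok k x`: copy `k` avoids vertex `x`. -/
def ok (k : Fin 6) (x : Fin n) : Prop := ∀ w, fmap ι k w ≠ x

lemma ok_free {x : Fin n} (hfree : ∀ tt, ι tt ≠ x) (k : Fin 6) : ok ι k x := by
  intro w
  rcases fmap_tri_cases ι k w with ⟨_, h2⟩ | ⟨_, h2⟩ | ⟨_, _, h2⟩ <;> rw [h2] <;> apply hfree

lemma ok_inl {x : Fin n} {i : Fin 3} (hx : ι (Sum.inl i) = x) {k : Fin 6}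
    (h1 : (tri k).1 ≠ i) (h2 : (tri k).2 ≠ i) : ok ι k x := by
  intro w hw
  rcases fmap_tri_cases ι k w with ⟨_, hh⟩ | ⟨_, hh⟩ | ⟨_, _, hh⟩ <;>
    rw [hh, ← hx] at hw <;> have := ι.injective hw
  · exact h1 (by simpa using this)
  · exact h2 (by simpa using this)
  · simp at this

lemma ok_inr {x : Fin n} {k0 : Fin 6} {w0 : {w : W // w ≠ p ∧ w ≠ q}}
    (hx : ι (Sum.inr (k0, w0)) = x) {k : Fin 6} (hk : k ≠ k0) : ok ι k x := by
  intro w hw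
  rcases fmap_tri_cases ι k w with ⟨_, hh⟩ | ⟨_, hh⟩ | ⟨_, _, hh⟩ <;>
    rw [hh, ← hx] at hw <;> have := ι.injective hw
  · simp at this
  · simp at this
  · simp only [Sum.inr.injEq, Prod.mk.injEq] at this
    exact hk this.1

lemma SE_tri (hpq : p ≠ q) {i j : Fin 3} (hij : i ≠ j) :
    s(ι (Sum.inl i), ι (Sum.inl j)) ∈ SE ι := by
  have hpqe : s(p, q) ∈ (⊤ : SimpleGraph W).edgeSet := by
    rw [SimpleGraph.mem_edgeSet]; simpa using hpq
  obtain ⟨k, hk | hk⟩ := tri_cover i j hij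
  · exact ⟨k, s(p, q), hpqe, by
      rw [Sym2.map_pair_eq, fmap_p, fmap_q ι hpq, hk.1, hk.2]⟩
  · exact ⟨k, s(p, q), hpqe, by
      rw [Sym2.map_pair_eq, fmap_p, fmap_q ι hpq, hk.1, hk.2]; exact Sym2.eq_swap⟩

lemma SE_cross (hpq : p ≠ q) (k0 : Fin 6) (w0 : {w : W // w ≠ p ∧ w ≠ q}) (i : Fin 3)
    (hi : (tri k0).1 = i ∨ (tri k0).2 = i) :
    s(ι (Sum.inl i), ι (Sum.inr (k0, w0))) ∈ SE ι := by
  rcases hi with hi | hi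
  · refine ⟨k0, s(p, w0.val), ?_, ?_⟩
    · rw [SimpleGraph.mem_edgeSet]; simpa using (Ne.symm w0.2.1)
    · rw [Sym2.map_pair_eq, fmap_p, fmap_priv ι w0.2.1 w0.2.2, hi]
  · refine ⟨k0, s(q, w0.val), ?_, ?_⟩
    · rw [SimpleGraph.mem_edgeSet]; simpa using (Ne.symm w0.2.2)
    · rw [Sym2.map_pair_eq, fmap_q ι hpq, fmap_priv ι w0.2.1 w0.2.2, hi]

lemma exists_avoid (hpq : p ≠ q) {u v : Fin n} (huv : u ≠ v)
    (hna : ¬ (Hgr ι).Adj u v) : ∃ k : Fin 6, ok ι k u ∧ ok ι k v := by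
  have classify : ∀ x : Fin n, (∃ i, ι (Sum.inl i) = x) ∨
      (∃ kw : Fin 6 × {w : W // w ≠ p ∧ w ≠ q}, ι (Sum.inr kw) = x) ∨
      (∀ tt, ι tt ≠ x) := by
    intro x
    by_cases h : ∃ tt, ι tt = x
    · obtain ⟨tt, rfl⟩ := h
      cases tt with
      | inl i => exact Or.inl ⟨i, rfl⟩
      | inr kw => exact Or.inr (Or.inl ⟨kw, rfl⟩)
    · push_neg at h; exact Or.inr (Or.inr h)
  have adjSE : ∀ {x y : Fin n}, x ≠ y → s(x, y) ∈ SE ι → (Hgr ι).Adj x y := by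
    intro x y hxy hse
    exact (Hgr_adj ι).2 ⟨hse, hxy⟩
  rcases classify u with ⟨i, hi⟩ | ⟨⟨k0, w0⟩, hk0⟩ | hfree
  · rcases classify v with ⟨j, hj⟩ | ⟨⟨k1, w1⟩, hk1⟩ | hfreev
    · exfalso
      have hij : i ≠ j := fun h => huv (by rw [← hi, ← hj, h])
      apply hna
      rw [← hi, ← hj]
      refine adjSE ?_ (SE_tri ι hpq hij)
      intro h
      exact hij (by simpa using ι.injective h)
    · by_cases hmem : (tri k1).1 = i ∨ (tri k1).2 = i
      · exfalso
        apply hna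
        rw [← hi, ← hk1]
        refine adjSE ?_ (SE_cross ι hpq k1 w1 i hmem)
        intro h
        simpa using ι.injective h
      · push_neg at hmem
        refine ⟨if c1 i = k1 then c2 i else c1 i, ?_, ?_⟩
        · split_ifs with h
          · exact ok_inl ι hi (c_avoid i).2.2.1 (c_avoid i).2.2.2.1
          · exact ok_inl ι hi (c_avoid i).1 (c_avoid i).2.1
        · split_ifs with h
          · exact ok_inr ι hk1 (fun hh => (c_avoid i).2.2.2.2 (by rw [hh, h]))
          · exact ok_inr ι hk1 h
    · exact ⟨c1 i, ok_inl ι hi (c_avoid i).1 (c_avoid i).2.1, ok_free ι hfreev _⟩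
  · rcases classify v with ⟨j, hj⟩ | ⟨⟨k1, w1⟩, hk1⟩ | hfreev
    · by_cases hmem : (tri k0).1 = j ∨ (tri k0).2 = j
      · exfalso
        apply hna
        rw [← hj, ← hk0]
        refine (adjSE ?_ (SE_cross ι hpq k0 w0 j hmem)).symm
        intro h
        simpa using ι.injective h
      · push_neg at hmem
        refine ⟨if c1 j = k0 then c2 j else c1 j, ?_, ?_⟩
        · split_ifs with h
          · exact ok_inr ι hk0 (fun hh => (c_avoid j).2.2.2.2 (by rw [hh, h]))
          · exact ok_inr ι hk0 h
        · split_ifs with h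
          · exact ok_inl ι hj (c_avoid j).2.2.1 (c_avoid j).2.2.2.1
          · exact ok_inl ι hj (c_avoid j).1 (c_avoid j).2.1
    · exact ⟨pick3 k0 k1, ok_inr ι hk0 (pick3_ne k0 k1).1, ok_inr ι hk1 (pick3_ne k0 k1).2⟩
    · exact ⟨other k0, ok_inr ι hk0 (other_ne k0), ok_free ι hfreev _⟩
  · rcases classify v with ⟨j, hj⟩ | ⟨⟨k1, w1⟩, hk1⟩ | hfreev
    · exact ⟨c1 j, ok_free ι hfree _, ok_inl ι hj (c_avoid j).1 (c_avoid j).2.1⟩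
    · exact ⟨other k1, ok_free ι hfree _, ok_inr ι hk1 (other_ne k1)⟩
    · exact ⟨0, ok_free ι hfree _, ok_free ι hfreev _⟩

end Sat

section Copy
variable {F : SimpleGraph (W ⊕ Fin 2)} {lF : Sym2 (W ⊕ Fin 2) → ℝ} {lK : Sym2 W → ℝ}

lemma F_edges (hF₁ : ∀ x y : W, F.Adj (Sum.inl x) (Sum.inl y) ↔ x ≠ y)
    (hF₂ : ∀ x y : Fin 2, F.Adj (Sum.inr x) (Sum.inr y) ↔ x ≠ y)
    (hFcross : ∀ (x : W) (y : Fin 2), ¬ F.Adj (Sum.inl x) (Sum.inr y))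
    {e : Sym2 (W ⊕ Fin 2)} (he : e ∈ F.edgeSet) :
    (∃ e' ∈ (⊤ : SimpleGraph W).edgeSet, e = Sym2.map Sum.inl e') ∨
      e = s(Sum.inr (0 : Fin 2), Sum.inr (1 : Fin 2)) := by
  induction e with
  | _ a b =>
    rw [SimpleGraph.mem_edgeSet] at he
    cases a with
    | inl x =>
      cases b with
      | inl y =>
        refine Or.inl ⟨s(x, y), ?_, (Sym2.map_pair_eq _ _ _).symm⟩
        rw [SimpleGraph.mem_edgeSet]
        simpa using (hF₁ x y).1 he
      | inr y => exact absurd he (hFcross x y)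
    | inr x =>
      cases b with
      | inl y => exact absurd he.symm (hFcross y x)
      | inr y =>
        right
        have hxy : x ≠ y := (hF₂ x y).1 he
        fin_cases x <;> fin_cases y <;> simp_all <;> exact Sym2.eq_swap

lemma sat_copy (hpq : p ≠ q)
    (hmin : ∀ e ∈ (⊤ : SimpleGraph W).edgeSet, e ≠ s(p, q) → lK s(p, q) < lK e)
    (hF₁ : ∀ x y : W, F.Adj (Sum.inl x) (Sum.inl y) ↔ x ≠ y)
    (hF₂ : ∀ x y : Fin 2, F.Adj (Sum.inr x) (Sum.inr y) ↔ x ≠ y)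
    (hFcross : ∀ (x : W) (y : Fin 2), ¬ F.Adj (Sum.inl x) (Sum.inr y))
    (hFl : ∀ e : Sym2 W, lF (Sym2.map Sum.inl e) = lK e)
    (hFmin : ∀ e ∈ (⊤ : SimpleGraph W).edgeSet,
      lF s(Sum.inr (0 : Fin 2), Sum.inr (1 : Fin 2)) < lK e)
    {u v : Fin n} (huv : u ≠ v) (hna : ¬ (Hgr ι).Adj u v) (t : ℝ)
    (ht : ∀ e ∈ (Hgr ι).edgeSet, t < lH ι lK e) :
    EOContains (Hgr ι ⊔ fromEdgeSet {s(u, v)})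
      (fun e => if e = s(u, v) then t else lH ι lK e) F lF := by
  obtain ⟨k, hku, hkv⟩ := exists_avoid ι hpq huv hna
  set φ : W ⊕ Fin 2 → Fin n :=
    Sum.elim (fmap ι k) (fun x => if x = 0 then u else v) with hφ
  have hφ0 : φ (Sum.inr 0) = u := rfl
  have hφ1 : φ (Sum.inr 1) = v := rfl
  have hφl : ∀ w : W, φ (Sum.inl w) = fmap ι k w := fun w => rfl
  -- images of clique edges avoid s(u,v)
  have himg : ∀ e' ∈ (⊤ : SimpleGraph W).edgeSet,
      Sym2.map (fmap ι k) e' ≠ s(u, v) := by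
    intro e' he' h
    induction e' with
    | _ c d =>
      rw [Sym2.map_pair_eq, Sym2.eq_iff] at h
      rcases h with ⟨h1, _⟩ | ⟨h1, _⟩
      · exact hku c h1
      · exact hkv c h1
  have hmapinl : ∀ e' : Sym2 W, Sym2.map φ (Sym2.map Sum.inl e') =
      Sym2.map (fmap ι k) e' := by
    intro e'
    rw [Sym2.map_map]
    rfl
  have hmape₀ : Sym2.map φ s(Sum.inr (0 : Fin 2), Sum.inr (1 : Fin 2)) = s(u, v) := by
    rw [Sym2.map_pair_eq, hφ0, hφ1]
  have hSEmem : ∀ e' ∈ (⊤ : SimpleGraph W).edgeSet,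
      Sym2.map (fmap ι k) e' ∈ (Hgr ι).edgeSet := by
    intro e' he'
    rw [Hgr_edgeSet ι hpq]
    exact ⟨k, e', he', rfl⟩
  have hlab : ∀ e' ∈ (⊤ : SimpleGraph W).edgeSet,
      (fun e => if e = s(u, v) then t else lH ι lK e) (Sym2.map φ (Sym2.map Sum.inl e')) =
        lab p q lK k e' := by
    intro e' he'
    rw [hmapinl e']
    simp only [if_neg (himg e' he')]
    exact lH_map ι hpq lK k he'
  refine ⟨φ, ?_, ?_, ?_⟩
  · -- injectivity
    intro a b h
    cases a with
    | inl wa =>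
      cases b with
      | inl wb => rw [hφl, hφl] at h; rw [fmap_inj ι hpq k h]
      | inr x =>
        exfalso
        rw [hφl] at h
        by_cases hx : x = 0
        · subst hx; exact hku wa (by rw [h, hφ0])
        · have hx1 : x = 1 := by omega
          subst hx1; exact hkv wa (by rw [h, hφ1])
    | inr x =>
      cases b with
      | inl wb =>
        exfalso
        rw [hφl] at h
        by_cases hx : x = 0
        · subst hx; exact hku wb (by rw [← h, hφ0])
        · have hx1 : x = 1 := by omega
          subst hx1; exact hkv wb (by rw [← h, hφ1])
      | inr y =>
        fin_cases x <;> fin_cases y <;> simp_all [hφ0, hφ1] <;>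
          first
            | rfl
            | (exact absurd h huv)
            | (exact absurd h.symm huv)
  · -- adjacency
    intro a b hab
    cases a with
    | inl wa =>
      cases b with
      | inl wb =>
        have hne : wa ≠ wb := (hF₁ wa wb).1 hab
        rw [SimpleGraph.sup_adj]
        left
        rw [hφl, hφl]
        refine (Hgr_adj ι).2 ⟨⟨k, s(wa, wb), ?_, Sym2.map_pair_eq _ _ _⟩, ?_⟩
        · rw [SimpleGraph.mem_edgeSet]; simpa using hne
        · intro h; exact hne (fmap_inj ι hpq k h)
      | inr y => exact absurd hab (hFcross wa y)
    | inr x =>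
      cases b with
      | inl wb => exact absurd hab.symm (hFcross wb x)
      | inr y =>
        have hxy : x ≠ y := (hF₂ x y).1 hab
        rw [SimpleGraph.sup_adj]
        right
        rw [SimpleGraph.fromEdgeSet_adj]
        fin_cases x <;> fin_cases y <;> simp_all [hφ0, hφ1]
        · exact fun h => huv h.symm
  · -- order
    intro e₁ he₁ e₂ he₂
    rcases F_edges hF₁ hF₂ hFcross he₁ with ⟨e₁', he₁', rfl⟩ | rfl <;>
      rcases F_edges hF₁ hF₂ hFcross he₂ with ⟨e₂', he₂', rfl⟩ | rfl
    · rw [hFl, hFl, hlab e₁' he₁', hlab e₂' he₂']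
      exact lab_lt lK hmin k he₁' he₂'
    · -- e₂ is the minimum edge: both sides false
      rw [hFl]
      constructor
      · intro h
        exact absurd (hFmin e₁' he₁') (lt_asymm h)
      · intro h
        exfalso
        have hts : (fun e => if e = s(u, v) then t else lH ι lK e) s(u, v) = t := by simp
        rw [hlab e₁' he₁', hmape₀, hts] at h
        have h2 := ht _ (hSEmem e₁' he₁')
        rw [lH_map ι hpq lK k he₁'] at h2
        linarith
    · -- e₁ is the minimum edge: both sides true
      rw [hFl]
      constructor
      · intro _
        have hts : (fun e => if e = s(u, v) then t else lH ι lK e) s(u, v) = t := by simp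
        rw [hlab e₂' he₂', hmape₀, hts]
        have h2 := ht _ (hSEmem e₂' he₂')
        rw [lH_map ι hpq lK k he₂'] at h2
        exact h2
      · intro _
        exact hFmin e₂' he₂'
    · simp
end Copy

section Final
variable [Fintype W] {lK : Sym2 W → ℝ}

lemma lH_injOn (hpq : p ≠ q) (hinjK : Set.InjOn lK (⊤ : SimpleGraph W).edgeSet) :
    Set.InjOn (lH ι lK) (Hgr ι).edgeSet := by
  intro e1 h1 e2 h2 h
  rw [Hgr_edgeSet ι hpq] at h1 h2
  obtain ⟨k, a, ha, rfl⟩ := h1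
  obtain ⟨k', a', ha', rfl⟩ := h2
  rw [lH_map ι hpq lK k ha, lH_map ι hpq lK k' ha'] at h
  exact lab_inj ι lK hinjK ha ha' h

lemma card_bound (hpq : p ≠ q) :
    (Hgr ι).edgeSet.ncard ≤ 6 * Fintype.card (Sym2 W) := by
  have hsub : (Hgr ι).edgeSet ⊆
      Set.range (fun x : Fin 6 × Sym2 W => Sym2.map (fmap ι x.1) x.2) := by
    rw [Hgr_edgeSet ι hpq]
    rintro e ⟨k, e', _, rfl⟩
    exact ⟨(k, e'), rfl⟩
  calc (Hgr ι).edgeSet.ncard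
      ≤ (Set.range (fun x : Fin 6 × Sym2 W => Sym2.map (fmap ι x.1) x.2)).ncard :=
        Set.ncard_le_ncard hsub (Set.finite_range _)
    _ ≤ Fintype.card (Fin 6 × Sym2 W) := by
        rw [← Set.image_univ]
        calc (Set.image _ Set.univ).ncard ≤ (Set.univ : Set (Fin 6 × Sym2 W)).ncard :=
              Set.ncard_image_le Set.finite_univ
          _ = _ := by rw [Set.ncard_univ]; exact Nat.card_eq_fintype_card
    _ = 6 * Fintype.card (Sym2 W) := by rw [Fintype.card_prod, Fintype.card_fin]

end Final
end
end EOaux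

/-- for every `r ≥ 2` and every edge-ordering of the complete graph `K_r`,
`sat_m(n, e₀ + K_r) = O(1)`, where `e₀ + K_r` is `K_r` together with a disjoint edge of
label smaller than all labels of `K_r`. -/
theorem stmt17 {W : Type} [Fintype W] (hcard : 2 ≤ Fintype.card W)
    (lK : Sym2 W → ℝ) (hinjK : Set.InjOn lK (⊤ : SimpleGraph W).edgeSet)
    (F : SimpleGraph (W ⊕ Fin 2)) (lF : Sym2 (W ⊕ Fin 2) → ℝ)
    (hinjF : Set.InjOn lF F.edgeSet)
    (hF₁ : ∀ x y : W, F.Adj (Sum.inl x) (Sum.inl y) ↔ x ≠ y)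
    (hF₂ : ∀ x y : Fin 2, F.Adj (Sum.inr x) (Sum.inr y) ↔ x ≠ y)
    (hFcross : ∀ (x : W) (y : Fin 2), ¬ F.Adj (Sum.inl x) (Sum.inr y))
    (hFl : ∀ e : Sym2 W, lF (Sym2.map Sum.inl e) = lK e)
    (hFmin : ∀ e ∈ (⊤ : SimpleGraph W).edgeSet,
      lF s(Sum.inr (0 : Fin 2), Sum.inr (1 : Fin 2)) < lK e) :
    ∃ C : ℕ, ∀ n : ℕ, satM F lF n ≤ C := by
  classical
  obtain ⟨a, b, hab⟩ := Fintype.exists_pair_of_one_lt_card (by omega : 1 < Fintype.card W)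
  have hne : ((⊤ : SimpleGraph W).edgeFinset).Nonempty := by
    refine ⟨s(a, b), ?_⟩
    rw [SimpleGraph.mem_edgeFinset, SimpleGraph.mem_edgeSet]
    simpa using hab
  obtain ⟨e₁, he₁, hminle⟩ := Finset.exists_min_image _ lK hne
  obtain ⟨p, q, rfl⟩ : ∃ p q : W, e₁ = s(p, q) := by
    induction e₁ with
    | _ p q => exact ⟨p, q, rfl⟩
  have he₁' : s(p, q) ∈ (⊤ : SimpleGraph W).edgeSet := SimpleGraph.mem_edgeFinset.1 he₁
  have hpq : p ≠ q := by simpa using he₁'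
  have hmin : ∀ e ∈ (⊤ : SimpleGraph W).edgeSet, e ≠ s(p, q) → lK s(p, q) < lK e := by
    intro e he hene
    rcases lt_or_eq_of_le (hminle e (SimpleGraph.mem_edgeFinset.2 he)) with h | h
    · exact h
    · exact absurd (hinjK he₁' he h) (fun hh => hene hh.symm)
  refine ⟨6 * Fintype.card (Sym2 W) + (3 + 6 * Fintype.card W) * (3 + 6 * Fintype.card W),
    fun n => ?_⟩
  by_cases hn : Fintype.card (Fin 3 ⊕ (Fin 6 × {w : W // w ≠ p ∧ w ≠ q})) ≤ n
  · obtain ⟨ι⟩ : Nonempty ((Fin 3 ⊕ (Fin 6 × {w : W // w ≠ p ∧ w ≠ q})) ↪ Fin n) :=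
      Function.Embedding.nonempty_of_card_le (by rwa [Fintype.card_fin])
    have hmem : (EOaux.Hgr ι).edgeSet.ncard ∈ {m | ∃ (H : SimpleGraph (Fin n))
        (lH : Sym2 (Fin n) → ℝ),
        Set.InjOn lH H.edgeSet ∧ SatMSat H lH F lF ∧ H.edgeSet.ncard = m} := by
      refine ⟨EOaux.Hgr ι, EOaux.lH ι lK, EOaux.lH_injOn ι hpq hinjK, ⟨?_, ?_⟩, rfl⟩
      · exact EOaux.noF ι hcard hpq hF₁ hF₂ hFl hFmin
      · intro u v huv hna t ht
        exact EOaux.sat_copy ι hpq hmin hF₁ hF₂ hFcross hFl hFmin huv hna t ht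
    calc satM F lF n ≤ (EOaux.Hgr ι).edgeSet.ncard := Nat.sInf_le hmem
      _ ≤ 6 * Fintype.card (Sym2 W) := EOaux.card_bound ι hpq
      _ ≤ _ := Nat.le_add_right _ _
  · push_neg at hn
    have hTle : Fintype.card (Fin 3 ⊕ (Fin 6 × {w : W // w ≠ p ∧ w ≠ q})) ≤
        3 + 6 * Fintype.card W := by
      rw [Fintype.card_sum, Fintype.card_prod, Fintype.card_fin, Fintype.card_fin]
      have := Fintype.card_subtype_le (fun w : W => w ≠ p ∧ w ≠ q)
      omega
    rcases Set.eq_empty_or_nonempty {m | ∃ (H : SimpleGraph (Fin n))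
        (lH : Sym2 (Fin n) → ℝ),
        Set.InjOn lH H.edgeSet ∧ SatMSat H lH F lF ∧ H.edgeSet.ncard = m} with hS | ⟨m, hm⟩
    · rw [satM, hS, Nat.sInf_empty]
      exact Nat.zero_le _
    · have h1 : satM F lF n ≤ m := Nat.sInf_le hm
      obtain ⟨H, lH', _, _, rfl⟩ := hm
      have h2 : H.edgeSet.ncard ≤ Fintype.card (Sym2 (Fin n)) := by
        calc H.edgeSet.ncard ≤ (Set.univ : Set (Sym2 (Fin n))).ncard :=
            Set.ncard_le_ncard (Set.subset_univ _) Set.finite_univ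
          _ = _ := by rw [Set.ncard_univ]; exact Nat.card_eq_fintype_card
      have h3 : Fintype.card (Sym2 (Fin n)) ≤
          (3 + 6 * Fintype.card W) * (3 + 6 * Fintype.card W) := by
        rw [Sym2.card, Fintype.card_fin, Nat.choose_two_right]
        calc (n + 1) * ((n + 1) - 1) / 2 ≤ (n + 1) * n := by
              rw [Nat.add_sub_cancel]; exact Nat.div_le_self _ _
          _ ≤ (3 + 6 * Fintype.card W) * (3 + 6 * Fintype.card W) :=
              Nat.mul_le_mul (by omega) (by omega)
      omega
end

section
/- For every k ≥ 4 there exists an edge-ordering G_k of the complete graph K_k such that for every edge ab of G_k there exist vertices v, w ∈ N(a) ∩ N(b) with l(av) < l(aw) and l(bv) > l(bw); consequently ssat_s(n, G_k) = Ω(n√(log n)). -/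
open SimpleGraph

section Aux
open Finset

lemma nat_sub_succ {c s : ℕ} (h : s < c) : c - s = (c - (s + 1)) + 1 := by omega

lemma card_fix {α : Type} [Fintype α] [DecidableEq α] (s : Finset α) (φ : α → Bool) :
    (Finset.univ.filter (fun g : α → Bool => ∀ p ∈ s, g p = φ p)).card
      = 2 ^ (Fintype.card α - s.card) := by
  classical
  induction s using Finset.induction_on with
  | empty => simp [Fintype.card_fun]
  | @insert a s ha ih =>
    have hsub : s.card < Fintype.card α := by
      have h := Finset.card_le_univ (insert a s)
      rw [Finset.card_insert_of_notMem ha] at h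
      exact Nat.lt_of_lt_of_le (Nat.lt_succ_self _) (by simpa using h)
    have hsplit :
        ((Finset.univ.filter (fun g : α → Bool => ∀ p ∈ s, g p = φ p)).filter
            (fun g => g a = φ a)).card
          + ((Finset.univ.filter (fun g : α → Bool => ∀ p ∈ s, g p = φ p)).filter
            (fun g => ¬ (g a = φ a))).card
          = (Finset.univ.filter (fun g : α → Bool => ∀ p ∈ s, g p = φ p)).card :=
      Finset.card_filter_add_card_filter_not _
    have hbij : ((Finset.univ.filter (fun g : α → Bool => ∀ p ∈ s, g p = φ p)).filter
            (fun g => g a = φ a)).card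
        = ((Finset.univ.filter (fun g : α → Bool => ∀ p ∈ s, g p = φ p)).filter
            (fun g => ¬ (g a = φ a))).card := by
      apply Finset.card_bij' (fun g _ => Function.update g a (!(g a)))
        (fun g _ => Function.update g a (!(g a)))
      · intro g hg
        simp [Function.update_idem, Function.update_self, Bool.not_not,
          Function.update_eq_self]
      · intro g hg
        simp [Function.update_idem, Function.update_self, Bool.not_not,
          Function.update_eq_self]
      · intro g hg
        simp only [Finset.mem_filter, Finset.mem_univ, true_and] at hg ⊢
        obtain ⟨h1, h2⟩ := hg
        refine ⟨fun p hp => ?_, ?_⟩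
        · rw [Function.update_of_ne (by rintro rfl; exact ha hp)]
          exact h1 p hp
        · rw [Function.update_self, h2]
          cases φ a <;> simp
      · intro g hg
        simp only [Finset.mem_filter, Finset.mem_univ, true_and] at hg ⊢
        obtain ⟨h1, h2⟩ := hg
        refine ⟨fun p hp => ?_, ?_⟩
        · rw [Function.update_of_ne (by rintro rfl; exact ha hp)]
          exact h1 p hp
        · rw [Function.update_self]
          cases hb : g a <;> cases hc : φ a <;> simp_all
    have hins : (Finset.univ.filter
        (fun g : α → Bool => ∀ p ∈ insert a s, g p = φ p))
        = (Finset.univ.filter (fun g : α → Bool => ∀ p ∈ s, g p = φ p)).filter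
            (fun g => g a = φ a) := by
      rw [Finset.filter_filter]
      apply Finset.filter_congr
      intro g _
      simp only [Finset.forall_mem_insert]
      tauto
    rw [hins, Finset.card_insert_of_notMem ha]
    have e2 : 2 * ((Finset.univ.filter (fun g : α → Bool => ∀ p ∈ s, g p = φ p)).filter
            (fun g => g a = φ a)).card = 2 ^ (Fintype.card α - s.card) := by
      rw [two_mul]
      nth_rewrite 2 [hbij]
      rw [hsplit, ih]
    rw [nat_sub_succ hsub, pow_succ, mul_comm _ 2] at e2
    exact Nat.eq_of_mul_eq_mul_left (by norm_num) e2

lemma greedy {V : Type} [Fintype V] [DecidableEq V] (H : SimpleGraph V)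
    [DecidableRel H.Adj] (d : ℕ) (s : Finset V) (hdeg : ∀ v ∈ s, H.degree v ≤ d) :
    ∃ F ⊆ s, (∀ u ∈ F, ∀ v ∈ F, u ≠ v → ¬ H.Adj u v) ∧ s.card ≤ F.card * (d + 1) := by
  classical
  induction s using Finset.strongInductionOn with
  | _ s ih =>
  rcases s.eq_empty_or_nonempty with rfl | ⟨v, hv⟩
  · exact ⟨∅, by simp⟩
  · have hss : s \ insert v (H.neighborFinset v) ⊂ s := by
      rw [Finset.ssubset_iff_of_subset (Finset.sdiff_subset)]
      exact ⟨v, hv, by simp⟩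
    obtain ⟨F', hF's, hF'ind, hF'card⟩ := ih _ hss
      (fun u hu => hdeg u (Finset.mem_sdiff.mp hu).1)
    have hvF' : v ∉ F' := fun h => by
      have := hF's h
      simp [Finset.mem_sdiff] at this
    have hnadj : ∀ w ∈ F', ¬ H.Adj v w := by
      intro w hw hadj
      have := (Finset.mem_sdiff.mp (hF's hw)).2
      exact this (Finset.mem_insert.mpr (Or.inr ((H.mem_neighborFinset v w).mpr hadj)))
    refine ⟨insert v F', ?_, ?_, ?_⟩
    · intro u hu
      rcases Finset.mem_insert.mp hu with rfl | hu
      · exact hv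
      · exact (Finset.mem_sdiff.mp (hF's hu)).1
    · intro u hu w hw huw hadj
      rcases Finset.mem_insert.mp hu with hu' | hu'
      · rcases Finset.mem_insert.mp hw with hw' | hw'
        · exact huw (hu'.trans hw'.symm)
        · exact hnadj w hw' (hu' ▸ hadj)
      · rcases Finset.mem_insert.mp hw with hw' | hw'
        · exact hnadj u hu' (hw' ▸ hadj.symm)
        · exact hF'ind u hu' w hw' huw hadj
    · have h1 : s.card ≤ (s \ insert v (H.neighborFinset v)).card
          + (insert v (H.neighborFinset v)).card :=
        tsub_le_iff_right.mp (Finset.le_card_sdiff _ _)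
      have h2 : (insert v (H.neighborFinset v)).card ≤ d + 1 := by
        have h3 := Finset.card_insert_le v (H.neighborFinset v)
        have hd := hdeg v hv
        rw [SimpleGraph.card_neighborFinset_eq_degree] at h3
        omega
      rw [Finset.card_insert_of_notMem hvF']
      nlinarith [hF'card]

lemma main_count {V : Type} [Fintype V] [LinearOrder V]
    (H : SimpleGraph V) [DecidableRel H.Adj] (lH : Sym2 V → ℝ)
    (hcross : ∀ u v : V, u ≠ v → ¬ H.Adj u v → ∃ x y : V,
      H.Adj u x ∧ H.Adj u y ∧ H.Adj v x ∧ H.Adj v y ∧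
      lH s(u, x) < lH s(u, y) ∧ lH s(v, y) < lH s(v, x))
    (d : ℕ) :
    (d + 1) * Fintype.card V ≤ (d + 1) ^ 2 * 2 ^ (d * d) + 2 * H.edgeFinset.card := by
  classical
  -- the "bit" of a pair at a vertex
  set bit : V → Sym2 V → Bool := fun u => Sym2.lift
    ⟨fun x y => decide (lH s(u, min x y) < lH s(u, max x y)), by
      intro x y; simp [min_comm, max_comm]⟩ with hbit
  set dom : V → Finset (Sym2 V) := fun u =>
    ((H.neighborFinset u) ×ˢ (H.neighborFinset u)).image (fun q => s(q.1, q.2)) with hdom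
  set A : V → Finset (Sym2 V → Bool) := fun u =>
    Finset.univ.filter (fun g => ∀ p ∈ dom u, g p = bit u p) with hA
  -- low-degree vertices
  set S : Finset V := Finset.univ.filter (fun v => H.degree v ≤ d) with hS
  have hhigh : (d + 1) * (Finset.univ.filter (fun v => ¬ H.degree v ≤ d)).card
      ≤ 2 * H.edgeFinset.card := by
    have h1 : (Finset.univ.filter (fun v => ¬ H.degree v ≤ d)).card • (d + 1)
        ≤ ∑ v ∈ Finset.univ.filter (fun v => ¬ H.degree v ≤ d), H.degree v := by
      apply Finset.card_nsmul_le_sum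
      intro x hx
      simp only [Finset.mem_filter] at hx
      omega
    have h2 : ∑ v ∈ Finset.univ.filter (fun v => ¬ H.degree v ≤ d), H.degree v
        ≤ ∑ v : V, H.degree v :=
      Finset.sum_le_sum_of_subset (Finset.filter_subset _ _)
    rw [SimpleGraph.sum_degrees_eq_twice_card_edges] at h2
    calc (d + 1) * (Finset.univ.filter (fun v => ¬ H.degree v ≤ d)).card
        = (Finset.univ.filter (fun v => ¬ H.degree v ≤ d)).card • (d + 1) := by
          rw [smul_eq_mul, mul_comm]
      _ ≤ 2 * H.edgeFinset.card := le_trans h1 h2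
  obtain ⟨F, hFS, hFind, hScard⟩ := greedy H d S (by
    intro v hv; exact (Finset.mem_filter.mp hv).2)
  -- each A u is big
  have hdomcard : ∀ u ∈ F, (dom u).card ≤ d * d := by
    intro u hu
    have h1 : (dom u).card ≤ ((H.neighborFinset u) ×ˢ (H.neighborFinset u)).card :=
      Finset.card_image_le
    rw [Finset.card_product, SimpleGraph.card_neighborFinset_eq_degree] at h1
    have h2 : H.degree u ≤ d := (Finset.mem_filter.mp (hFS hu)).2
    exact le_trans h1 (Nat.mul_le_mul h2 h2)
  -- disjointness
  have hdisj : ∀ u ∈ F, ∀ v ∈ F, u ≠ v → Disjoint (A u) (A v) := by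
    intro u hu v hv huv
    rw [Finset.disjoint_left]
    intro g hgu hgv
    simp only [hA, Finset.mem_filter, Finset.mem_univ, true_and] at hgu hgv
    obtain ⟨x, y, hux, huy, hvx, hvy, hu1, hv1⟩ := hcross u v huv (hFind u hu v hv huv)
    have hxy : x ≠ y := by rintro rfl; exact lt_irrefl _ hu1
    have hpu : s(x, y) ∈ dom u := by
      simp only [hdom, Finset.mem_image]
      exact ⟨(x, y), Finset.mem_product.mpr ⟨(H.mem_neighborFinset u x).mpr hux,
        (H.mem_neighborFinset u y).mpr huy⟩, rfl⟩
    have hpv : s(x, y) ∈ dom v := by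
      simp only [hdom, Finset.mem_image]
      exact ⟨(x, y), Finset.mem_product.mpr ⟨(H.mem_neighborFinset v x).mpr hvx,
        (H.mem_neighborFinset v y).mpr hvy⟩, rfl⟩
    have heq : bit u s(x, y) = bit v s(x, y) := by
      rw [← hgu _ hpu, ← hgv _ hpv]
    have hbitu : bit u s(x, y) = decide (lH s(u, min x y) < lH s(u, max x y)) := by
      simp [hbit]
    have hbitv : bit v s(x, y) = decide (lH s(v, min x y) < lH s(v, max x y)) := by
      simp [hbit]
    rcases lt_or_gt_of_ne hxy with h | h
    · rw [hbitu, hbitv, min_eq_left h.le, max_eq_right h.le] at heq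
      rw [decide_eq_true hu1] at heq
      have : lH s(v, x) < lH s(v, y) := of_decide_eq_true heq.symm
      exact absurd hv1 (asymm this)
    · rw [hbitu, hbitv, min_eq_right h.le, max_eq_left h.le] at heq
      rw [decide_eq_true hv1] at heq
      have : lH s(u, y) < lH s(u, x) := of_decide_eq_true heq
      exact absurd hu1 (asymm this)
  -- counting
  have hsum : ∑ u ∈ F, (A u).card ≤ 2 ^ (Fintype.card (Sym2 V)) := by
    rw [← Finset.card_biUnion hdisj]
    calc (F.biUnion A).card ≤ (Finset.univ : Finset (Sym2 V → Bool)).card :=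
          Finset.card_le_univ _
      _ = 2 ^ (Fintype.card (Sym2 V)) := by
          rw [Finset.card_univ, Fintype.card_fun]; simp
  have hAcard : ∀ u ∈ F, 2 ^ (Fintype.card (Sym2 V) - d * d) ≤ (A u).card := by
    intro u hu
    rw [hA]
    simp only
    rw [card_fix (dom u) (bit u)]
    exact Nat.pow_le_pow_right (by norm_num) (by have := hdomcard u hu; omega)
  have hFbound : F.card ≤ 2 ^ (d * d) := by
    have h1 : F.card * 2 ^ (Fintype.card (Sym2 V) - d * d)
        ≤ 2 ^ (Fintype.card (Sym2 V)) := by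
      calc F.card * 2 ^ (Fintype.card (Sym2 V) - d * d)
          = ∑ _u ∈ F, 2 ^ (Fintype.card (Sym2 V) - d * d) := by
            rw [Finset.sum_const, smul_eq_mul]
        _ ≤ ∑ u ∈ F, (A u).card := Finset.sum_le_sum hAcard
        _ ≤ 2 ^ (Fintype.card (Sym2 V)) := hsum
    have h2 : 2 ^ (Fintype.card (Sym2 V))
        ≤ 2 ^ (d * d) * 2 ^ (Fintype.card (Sym2 V) - d * d) := by
      rw [← pow_add]
      exact Nat.pow_le_pow_right (by norm_num) (by omega)
    have h3 : F.card * 2 ^ (Fintype.card (Sym2 V) - d * d)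
        ≤ 2 ^ (d * d) * 2 ^ (Fintype.card (Sym2 V) - d * d) := le_trans h1 h2
    exact Nat.le_of_mul_le_mul_right h3 (pow_pos (by norm_num) _)
  -- assemble
  have hcardsplit : S.card + (Finset.univ.filter (fun v => ¬ H.degree v ≤ d)).card
      = Fintype.card V := by
    rw [hS, Finset.card_filter_add_card_filter_not, Finset.card_univ]
  calc (d + 1) * Fintype.card V
      = (d + 1) * S.card
        + (d + 1) * (Finset.univ.filter (fun v => ¬ H.degree v ≤ d)).card := by
        rw [← Nat.mul_add, hcardsplit]
    _ ≤ (d + 1) * (F.card * (d + 1)) + 2 * H.edgeFinset.card := by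
        exact Nat.add_le_add (Nat.mul_le_mul_left _ hScard) hhigh
    _ ≤ (d + 1) ^ 2 * 2 ^ (d * d) + 2 * H.edgeFinset.card := by
        have := Nat.mul_le_mul_left ((d+1)*(d+1)) hFbound
        nlinarith [hFbound]

lemma cross_of_ssat {k n : ℕ} (lG : Sym2 (Fin k) → ℝ)
    (hG : ∀ a b : Fin k, a ≠ b → ∃ v w : Fin k,
      v ≠ a ∧ v ≠ b ∧ w ≠ a ∧ w ≠ b ∧ v ≠ w ∧
      lG s(a, v) < lG s(a, w) ∧ lG s(b, w) < lG s(b, v))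
    (H : SimpleGraph (Fin n)) (lH : Sym2 (Fin n) → ℝ)
    (hs : SsatSSat H lH (⊤ : SimpleGraph (Fin k)) lG) :
    ∀ u v : Fin n, u ≠ v → ¬ H.Adj u v → ∃ x y : Fin n,
      H.Adj u x ∧ H.Adj u y ∧ H.Adj v x ∧ H.Adj v y ∧
      lH s(u, x) < lH s(u, y) ∧ lH s(v, y) < lH s(v, x) := by
  intro u v huv hnadj
  obtain ⟨t, _ht, f, ⟨finj, fhom, ford⟩, e, heG, hmap⟩ := hs u v huv hnadj
  revert heG hmap
  induction e using Sym2.ind with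
  | _ a b =>
  intro heG hmap
  have hab : a ≠ b := by
    rw [SimpleGraph.mem_edgeSet, top_adj] at heG; exact heG
  rw [Sym2.map_pair_eq, Sym2.eq_iff] at hmap
  have aux : ∀ a b v₀ w₀ : Fin k, a ≠ b → v₀ ≠ a → v₀ ≠ b → w₀ ≠ a → w₀ ≠ b →
      lG s(a, v₀) < lG s(a, w₀) → lG s(b, w₀) < lG s(b, v₀) → f a = u → f b = v →
      ∃ x y : Fin n, H.Adj u x ∧ H.Adj u y ∧ H.Adj v x ∧ H.Adj v y ∧
        lH s(u, x) < lH s(u, y) ∧ lH s(v, y) < lH s(v, x) := by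
    intro a b v₀ w₀ hab hv0a hv0b hw0a hw0b h1 h2 hfa hfb
    have hnequ : ∀ q : Fin k, q ≠ a → f q ≠ u := fun q hqa h =>
      hqa (finj (h.trans hfa.symm))
    have hneqv : ∀ q : Fin k, q ≠ b → f q ≠ v := fun q hqb h =>
      hqb (finj (h.trans hfb.symm))
    have hAdjH : ∀ p q : Fin k, p ≠ q → f q ≠ u → f q ≠ v → H.Adj (f p) (f q) := by
      intro p q hpq hqu hqv
      have h := fhom p q (by rw [top_adj]; exact hpq)
      rcases (SimpleGraph.sup_adj _ _ _ _).mp h with h' | h'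
      · exact h'
      · rw [SimpleGraph.fromEdgeSet_adj, Set.mem_singleton_iff, Sym2.eq_iff] at h'
        rcases h'.1 with ⟨_, hc⟩ | ⟨_, hc⟩
        · exact absurd hc hqv
        · exact absurd hc hqu
    have hlab : ∀ p q : Fin k, f q ≠ u → f q ≠ v →
        (fun e => if e = s(u, v) then t else lH e) (Sym2.map f s(p, q))
          = lH s(f p, f q) := by
      intro p q hqu hqv
      rw [Sym2.map_pair_eq]
      simp only
      rw [if_neg]
      rw [Sym2.eq_iff]
      rintro (⟨_, hc⟩ | ⟨_, hc⟩)
      · exact hqv hc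
      · exact hqu hc
    have hmem : ∀ p q : Fin k, p ≠ q → s(p, q) ∈ (⊤ : SimpleGraph (Fin k)).edgeSet := by
      intro p q hpq; rw [SimpleGraph.mem_edgeSet, top_adj]; exact hpq
    have hi1 := (ford s(a, v₀) (hmem a v₀ (Ne.symm hv0a)) s(a, w₀)
      (hmem a w₀ (Ne.symm hw0a))).mp h1
    have hi2 := (ford s(b, w₀) (hmem b w₀ (Ne.symm hw0b)) s(b, v₀)
      (hmem b v₀ (Ne.symm hv0b))).mp h2
    rw [hlab a v₀ (hnequ v₀ hv0a) (hneqv v₀ hv0b),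
        hlab a w₀ (hnequ w₀ hw0a) (hneqv w₀ hw0b)] at hi1
    rw [hlab b w₀ (hnequ w₀ hw0a) (hneqv w₀ hw0b),
        hlab b v₀ (hnequ v₀ hv0a) (hneqv v₀ hv0b)] at hi2
    refine ⟨f v₀, f w₀, ?_, ?_, ?_, ?_, ?_, ?_⟩
    · rw [← hfa]; exact hAdjH a v₀ (Ne.symm hv0a) (hnequ v₀ hv0a) (hneqv v₀ hv0b)
    · rw [← hfa]; exact hAdjH a w₀ (Ne.symm hw0a) (hnequ w₀ hw0a) (hneqv w₀ hw0b)
    · rw [← hfb]; exact hAdjH b v₀ (Ne.symm hv0b) (hnequ v₀ hv0a) (hneqv v₀ hv0b)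
    · rw [← hfb]; exact hAdjH b w₀ (Ne.symm hw0b) (hnequ w₀ hw0a) (hneqv w₀ hw0b)
    · rw [← hfa]; exact hi1
    · rw [← hfb]; exact hi2
  obtain ⟨v₀, w₀, hv0a, hv0b, hw0a, hw0b, _hvw, h1, h2⟩ := hG a b hab
  rcases hmap with ⟨hfa, hfb⟩ | ⟨hfa, hfb⟩
  · exact aux a b v₀ w₀ hab hv0a hv0b hw0a hw0b h1 h2 hfa hfb
  · exact aux b a w₀ v₀ hab.symm hw0b hw0a hv0b hv0a h2 h1 hfb hfa


-- helper: equal min/max of vals gives equal Sym2 pairs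
lemma sym2_ext_minmax {m : ℕ} (i j p q : Fin m)
    (h1 : min i.val j.val = min p.val q.val)
    (h2 : max i.val j.val = max p.val q.val) : s(i, j) = s(p, q) := by
  rw [Sym2.eq_iff]
  have h : (i.val = p.val ∧ j.val = q.val) ∨ (i.val = q.val ∧ j.val = p.val) := by omega
  rcases h with ⟨ha, hb⟩ | ⟨ha, hb⟩
  · exact Or.inl ⟨Fin.ext ha, Fin.ext hb⟩
  · exact Or.inr ⟨Fin.ext ha, Fin.ext hb⟩

-- the tiebreak code
lemma tie_lt {m : ℕ} (i j : Fin m) : min i.val j.val * m + max i.val j.val < m * m := by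
  have hi := i.isLt
  have hj := j.isLt
  have h1 : min i.val j.val * m + max i.val j.val < (min i.val j.val + 1) * m := by
    have : max i.val j.val < m := by omega
    nlinarith
  have h2 : (min i.val j.val + 1) * m ≤ m * m := by
    have : min i.val j.val + 1 ≤ m := by omega
    exact Nat.mul_le_mul_right m this
  omega

lemma tie_inj {m : ℕ} (i j p q : Fin m)
    (h : min i.val j.val * m + max i.val j.val
        = min p.val q.val * m + max p.val q.val) : s(i, j) = s(p, q) := by
  have hm : 0 < m := i.pos
  have e1 : (min i.val j.val * m + max i.val j.val) % m = max i.val j.val := by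
    rw [add_comm, Nat.add_mul_mod_self_right, Nat.mod_eq_of_lt (by have := i.isLt; have := j.isLt; omega)]
  have e2 : (min p.val q.val * m + max p.val q.val) % m = max p.val q.val := by
    rw [add_comm, Nat.add_mul_mod_self_right, Nat.mod_eq_of_lt (by have := p.isLt; have := q.isLt; omega)]
  have hmax : max i.val j.val = max p.val q.val := by rw [← e1, ← e2, h]
  have hmin : min i.val j.val = min p.val q.val := by
    have : min i.val j.val * m = min p.val q.val * m := by omega
    exact Nat.eq_of_mul_eq_mul_right hm this
  exact sym2_ext_minmax i j p q hmin hmax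

-- an injective labelling of all pairs (for the complete-graph witness)
noncomputable def tieLabel (m : ℕ) : Sym2 (Fin m) → ℝ := fun e =>
  ((Sym2.lift ⟨fun i j => min i.val j.val * m + max i.val j.val, by
    intro a b; dsimp only; rw [min_comm, max_comm]⟩ e : ℕ) : ℝ)

lemma tieLabel_inj (m : ℕ) : Function.Injective (tieLabel m) := by
  intro e₁ e₂ h
  induction e₁ using Sym2.ind with | _ i j =>
  induction e₂ using Sym2.ind with | _ p q =>
  unfold tieLabel at h
  rw [Sym2.lift_mk, Sym2.lift_mk] at h
  exact tie_inj i j p q (by exact_mod_cast h)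

section Cyclic
variable {k : ℕ}

/-- cyclic distance on `ZMod k` -/
def cd (x y : ZMod k) : ℕ := min (x - y).val (y - x).val

lemma cd_comm (x y : ZMod k) : cd x y = cd y x := by unfold cd; rw [min_comm]

lemma zmod_eq_of_val_le_one (hk : 2 ≤ k) (x : ZMod k) (hx : x.val ≤ 1) :
    x = 0 ∨ x = 1 := by
  haveI : NeZero k := ⟨by omega⟩
  rcases Nat.le_one_iff_eq_zero_or_eq_one.mp hx with h0 | h1
  · exact Or.inl ((ZMod.val_eq_zero x).mp h0)
  · right
    have h := ZMod.natCast_rightInverse (n := k) x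
    rw [← h, h1]; norm_num

lemma numeral_ne_zero (hk : 5 ≤ k) (c : ℕ) (hc1 : 1 ≤ c) (hc4 : c ≤ 4) :
    ((c : ℕ) : ZMod k) ≠ 0 := by
  intro hc
  rw [ZMod.natCast_eq_zero_iff] at hc
  have := Nat.le_of_dvd (by omega) hc
  omega

lemma cd_add_one (hk : 5 ≤ k) (x : ZMod k) : cd x (x + 1) = 1 := by
  haveI : NeZero k := ⟨by omega⟩
  haveI : Fact (1 < k) := ⟨by omega⟩
  unfold cd
  have h1 : (x + 1 - x) = (1 : ZMod k) := by ring
  have h2 : x - (x + 1) = (-1 : ZMod k) := by ring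
  rw [h1, h2, ZMod.val_one]
  have h3 : (-1 : ZMod k) ≠ 0 := by
    intro hc
    have : ((1 : ℕ) : ZMod k) = 0 := by push_cast; linear_combination -hc
    exact numeral_ne_zero hk 1 le_rfl (by norm_num) this
  have h4 : 1 ≤ (-1 : ZMod k).val := by
    rcases Nat.eq_zero_or_pos (-1 : ZMod k).val with h | h
    · exact absurd ((ZMod.val_eq_zero _).mp h) h3
    · omega
  omega

lemma cd_sub_one (hk : 5 ≤ k) (x : ZMod k) : cd x (x - 1) = 1 := by
  have := cd_add_one hk (x - 1)
  rw [cd_comm]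
  convert this using 2
  ring

lemma cd_ge_two (hk : 5 ≤ k) (x w : ZMod k) (h1 : w ≠ x - 1) (h2 : w ≠ x)
    (h3 : w ≠ x + 1) : 2 ≤ cd x w := by
  by_contra hc
  push_neg at hc
  unfold cd at hc
  have : (x - w).val ≤ 1 ∨ (w - x).val ≤ 1 := by omega
  rcases this with h | h
  · rcases zmod_eq_of_val_le_one (by omega) _ h with h' | h'
    · exact h2 (by linear_combination -h')
    · exact h1 (by linear_combination -h')
  · rcases zmod_eq_of_val_le_one (by omega) _ h with h' | h'
    · exact h2 (by linear_combination h')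
    · exact h3 (by linear_combination h')

lemma pick_nbr (hk : 5 ≤ k) (x y : ZMod k) (hxy : x ≠ y) :
    ∃ v : ZMod k, (v = x + 1 ∨ v = x - 1) ∧ v ≠ y - 1 ∧ v ≠ y ∧ v ≠ y + 1 := by
  have key : ∀ c : ℕ, 1 ≤ c → c ≤ 4 → ((c : ℕ) : ZMod k) = 0 → False := fun c a b h =>
    numeral_ne_zero hk c a b h
  by_contra hcon
  push_neg at hcon
  have hp := hcon (x + 1) (Or.inl rfl)
  have hm := hcon (x - 1) (Or.inr rfl)
  -- hp, hm : v ≠ y-1 → v ≠ y → v = y+1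
  rcases eq_or_ne (x + 1) (y - 1) with h1 | h1'
  · rcases eq_or_ne (x - 1) (y - 1) with h2 | h2'
    · exact key 2 (by norm_num) (by norm_num) (by push_cast; linear_combination h1 - h2)
    · rcases eq_or_ne (x - 1) y with h2 | h2''
      · exact key 3 (by norm_num) (by norm_num) (by push_cast; linear_combination h1 - h2)
      · have h2 := hm h2' h2''
        exact key 4 (by norm_num) (by norm_num) (by push_cast; linear_combination h1 - h2)
  · rcases eq_or_ne (x + 1) y with h1 | h1''
    · rcases eq_or_ne (x - 1) (y - 1) with h2 | h2'
      · exact key 1 (by norm_num) (by norm_num) (by push_cast; linear_combination h1 - h2)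
      · rcases eq_or_ne (x - 1) y with h2 | h2''
        · exact key 2 (by norm_num) (by norm_num) (by push_cast; linear_combination h1 - h2)
        · have h2 := hm h2' h2''
          exact key 3 (by norm_num) (by norm_num) (by push_cast; linear_combination h1 - h2)
    · have h1 := hp h1' h1''
      exact hxy (by linear_combination h1)

end Cyclic

lemma exists_lG_ge5 (k : ℕ) (hk : 5 ≤ k) :
    ∃ lG : Sym2 (Fin k) → ℝ, Function.Injective lG ∧
      (∀ a b : Fin k, a ≠ b → ∃ v w : Fin k,
        v ≠ a ∧ v ≠ b ∧ w ≠ a ∧ w ≠ b ∧ v ≠ w ∧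
        lG s(a, v) < lG s(a, w) ∧ lG s(b, w) < lG s(b, v)) := by
  haveI : NeZero k := ⟨by omega⟩
  set FN : Sym2 (Fin k) → ℕ := Sym2.lift ⟨fun i j =>
      k * k * cd ((i.val : ZMod k)) ((j.val : ZMod k))
        + (min i.val j.val * k + max i.val j.val), by
    intro a b; dsimp only; rw [cd_comm, min_comm, max_comm]⟩ with hFN
  have hFNmk : ∀ i j : Fin k, FN s(i, j)
      = k * k * cd ((i.val : ZMod k)) ((j.val : ZMod k))
        + (min i.val j.val * k + max i.val j.val) := by
    intro i j; rw [hFN, Sym2.lift_mk]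
  refine ⟨fun e => (FN e : ℝ), ?_, ?_⟩
  · intro e₁ e₂ h
    have hN : FN e₁ = FN e₂ := by
      have h' : (FN e₁ : ℝ) = (FN e₂ : ℝ) := h
      exact_mod_cast h'
    induction e₁ using Sym2.ind with | _ i j =>
    induction e₂ using Sym2.ind with | _ p q =>
    rw [hFNmk, hFNmk] at hN
    have t1 := tie_lt i j
    have t2 := tie_lt p q
    have e1 : (k * k * cd ((i.val : ZMod k)) ((j.val : ZMod k))
        + (min i.val j.val * k + max i.val j.val)) % (k * k)
        = min i.val j.val * k + max i.val j.val := by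
      rw [Nat.mul_add_mod, Nat.mod_eq_of_lt t1]
    have e2 : (k * k * cd ((p.val : ZMod k)) ((q.val : ZMod k))
        + (min p.val q.val * k + max p.val q.val)) % (k * k)
        = min p.val q.val * k + max p.val q.val := by
      rw [Nat.mul_add_mod, Nat.mod_eq_of_lt t2]
    have hT : min i.val j.val * k + max i.val j.val
        = min p.val q.val * k + max p.val q.val := by rw [← e1, ← e2, hN]
    exact tie_inj i j p q hT
  · intro a b hab
    set x : ZMod k := (a.val : ZMod k) with hx
    set y : ZMod k := (b.val : ZMod k) with hy
    have hxy : x ≠ y := by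
      intro h
      apply hab
      apply Fin.ext
      have h1 : x.val = a.val := ZMod.val_cast_of_lt a.isLt
      have h2 : y.val = b.val := ZMod.val_cast_of_lt b.isLt
      rw [← h1, ← h2, h]
    obtain ⟨v', hv'c, hv'1, hv'2, hv'3⟩ := pick_nbr hk x y hxy
    obtain ⟨w', hw'c, hw'1, hw'2, hw'3⟩ := pick_nbr hk y x hxy.symm
    have hone : ((1 : ℕ) : ZMod k) ≠ 0 := numeral_ne_zero hk 1 le_rfl (by norm_num)
    have hv'x : v' ≠ x := by
      rcases hv'c with rfl | rfl <;> intro h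
      · exact hone (by push_cast; linear_combination h)
      · exact hone (by push_cast; linear_combination -h)
    have hw'y : w' ≠ y := by
      rcases hw'c with rfl | rfl <;> intro h
      · exact hone (by push_cast; linear_combination h)
      · exact hone (by push_cast; linear_combination -h)
    have hv'w' : v' ≠ w' := by
      rcases hv'c with rfl | rfl
      · exact fun h => hw'3 h.symm
      · exact fun h => hw'1 h.symm
    set v : Fin k := ⟨v'.val, ZMod.val_lt v'⟩ with hv
    set w : Fin k := ⟨w'.val, ZMod.val_lt w'⟩ with hw
    have hψv : ((v.val : ℕ) : ZMod k) = v' := ZMod.natCast_rightInverse v'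
    have hψw : ((w.val : ℕ) : ZMod k) = w' := ZMod.natCast_rightInverse w'
    have hva : v ≠ a := by
      intro h; apply hv'x; rw [← hψv, h]
    have hvb : v ≠ b := by
      intro h; apply hv'2; rw [← hψv, h]
    have hwa : w ≠ a := by
      intro h; apply hw'2; rw [← hψw, h]
    have hwb : w ≠ b := by
      intro h; apply hw'y; rw [← hψw, h]
    have hvw : v ≠ w := by
      intro h; apply hv'w'; rw [← hψv, h, hψw]
    -- distances
    have hdav : cd x v' = 1 := by
      rcases hv'c with rfl | rfl
      · exact cd_add_one hk x
      · exact cd_sub_one hk x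
    have hdbw : cd y w' = 1 := by
      rcases hw'c with rfl | rfl
      · exact cd_add_one hk y
      · exact cd_sub_one hk y
    have hdaw : 2 ≤ cd x w' := cd_ge_two hk x w' hw'1 hw'2 hw'3
    have hdbv : 2 ≤ cd y v' := cd_ge_two hk y v' hv'1 hv'2 hv'3
    refine ⟨v, w, hva, hvb, hwa, hwb, hvw, ?_, ?_⟩
    · have hNlt : FN s(a, v) < FN s(a, w) := by
        rw [hFNmk, hFNmk, hψv, hψw, ← hx, hdav]
        have t1 := tie_lt a v
        have h2 : k * k * 2 ≤ k * k * cd x w' := Nat.mul_le_mul_left _ hdaw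
        calc k * k * 1 + (min a.val v.val * k + max a.val v.val)
            < k * k * 1 + k * k := Nat.add_lt_add_left t1 _
          _ = k * k * 2 := by ring
          _ ≤ k * k * cd x w' := h2
          _ ≤ k * k * cd x w' + (min a.val w.val * k + max a.val w.val) :=
              Nat.le_add_right _ _
      show (FN s(a, v) : ℝ) < (FN s(a, w) : ℝ)
      exact_mod_cast hNlt
    · have hNlt : FN s(b, w) < FN s(b, v) := by
        rw [hFNmk, hFNmk, hψv, hψw, ← hy, hdbw]
        have t1 := tie_lt b w
        have h2 : k * k * 2 ≤ k * k * cd y v' := Nat.mul_le_mul_left _ hdbv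
        calc k * k * 1 + (min b.val w.val * k + max b.val w.val)
            < k * k * 1 + k * k := Nat.add_lt_add_left t1 _
          _ = k * k * 2 := by ring
          _ ≤ k * k * cd y v' := h2
          _ ≤ k * k * cd y v' + (min b.val v.val * k + max b.val v.val) :=
              Nat.le_add_right _ _
      show (FN s(b, w) : ℝ) < (FN s(b, v) : ℝ)
      exact_mod_cast hNlt


def M4 : Fin 4 → Fin 4 → ℕ :=
  fun i j => ([[6,0,2,4],[0,7,5,3],[2,5,8,1],[4,3,1,9]].getD i.val []).getD j.val 0

lemma M4_symm : ∀ i j : Fin 4, M4 i j = M4 j i := by decide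

def F4 : Sym2 (Fin 4) → ℕ := Sym2.lift ⟨M4, M4_symm⟩

lemma F4_cross : ∀ a b : Fin 4, a ≠ b → ∃ v w : Fin 4,
    v ≠ a ∧ v ≠ b ∧ w ≠ a ∧ w ≠ b ∧ v ≠ w ∧
    F4 s(a, v) < F4 s(a, w) ∧ F4 s(b, w) < F4 s(b, v) := by decide

lemma F4_inj : ∀ e₁ e₂ : Sym2 (Fin 4), F4 e₁ = F4 e₂ → e₁ = e₂ := by decide


-- the asymptotic step, standalone
lemma asymp (n m : ℕ) (hn : 16 ≤ n)
    (hineq : ∀ d : ℕ, (d + 1) * n ≤ (d + 1) ^ 2 * 2 ^ (d * d) + 2 * m) :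
    (1/8 : ℝ) * n * Real.sqrt (Real.log n) ≤ (m : ℝ) := by
  have hn1 : (1 : ℝ) ≤ n := by exact_mod_cast le_trans (by norm_num) hn
  have hnpos : (0 : ℝ) < n := by linarith
  have hlog0 : (0 : ℝ) ≤ Real.log n := Real.log_nonneg hn1
  set R := Real.sqrt (Real.log n) with hR
  have hR0 : 0 ≤ R := Real.sqrt_nonneg _
  set d := ⌊R / 2⌋₊ with hd
  have hd1 : (d : ℝ) ≤ R / 2 := Nat.floor_le (by positivity)
  have hd2 : R / 2 < (d : ℝ) + 1 := Nat.lt_floor_add_one _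
  -- 2^(d*d) ≤ n^(1/4)
  have key1 : ((2 : ℝ)) ^ (d * d : ℕ) ≤ (n : ℝ) ^ ((1 : ℝ)/4) := by
    have hdd : ((d * d : ℕ) : ℝ) ≤ Real.log n / 4 := by
      push_cast
      have h1 : (d : ℝ) * d ≤ (R / 2) * (R / 2) := by nlinarith
      have h2 : R * R = Real.log n := Real.mul_self_sqrt hlog0
      nlinarith
    calc ((2 : ℝ)) ^ (d * d : ℕ) = (2 : ℝ) ^ ((d * d : ℕ) : ℝ) :=
          (Real.rpow_natCast 2 (d * d)).symm
      _ ≤ (2 : ℝ) ^ (Real.log n / 4) :=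
          Real.rpow_le_rpow_of_exponent_le (by norm_num) hdd
      _ = Real.exp (Real.log 2 * (Real.log n / 4)) := by
          rw [Real.rpow_def_of_pos (by norm_num)]
      _ ≤ Real.exp (Real.log n * (1/4 : ℝ)) := by
          apply Real.exp_le_exp.mpr
          have hl2 : Real.log 2 ≤ 1 := by
            have := Real.log_two_lt_d9
            linarith
          nlinarith [hlog0]
      _ = (n : ℝ) ^ ((1 : ℝ)/4) := by
          rw [Real.rpow_def_of_pos hnpos]
  -- d+1 ≤ √n
  have key2 : (d : ℝ) + 1 ≤ Real.sqrt n := by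
    have h1 : Real.log n ≤ (n : ℝ) := by
      have := Real.log_le_sub_one_of_pos hnpos
      linarith
    have h2 : R ≤ Real.sqrt n := Real.sqrt_le_sqrt h1
    have h3 : (2 : ℝ) ≤ Real.sqrt n := by
      rw [show (2 : ℝ) = Real.sqrt 4 by
        rw [show (4 : ℝ) = 2^2 by norm_num, Real.sqrt_sq (by norm_num)]]
      apply Real.sqrt_le_sqrt
      exact_mod_cast le_trans (by norm_num) hn
    linarith
  -- √n * n^(1/4) ≤ n / 2
  have key3 : Real.sqrt n * (n : ℝ) ^ ((1:ℝ)/4) ≤ (n : ℝ) / 2 := by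
    have e1 : Real.sqrt n = (n : ℝ) ^ ((1:ℝ)/2) := Real.sqrt_eq_rpow _
    have e2 : (n : ℝ) ^ ((1:ℝ)/2) * (n : ℝ) ^ ((1:ℝ)/4) = (n : ℝ) ^ ((3:ℝ)/4) := by
      rw [← Real.rpow_add hnpos]; norm_num
    have e3 : (n : ℝ) = (n : ℝ) ^ ((3:ℝ)/4) * (n : ℝ) ^ ((1:ℝ)/4) := by
      rw [← Real.rpow_add hnpos]; norm_num
    have h4 : (2 : ℝ) ≤ (n : ℝ) ^ ((1:ℝ)/4) := by
      have h16 : ((16 : ℝ)) ^ ((1:ℝ)/4) ≤ (n : ℝ) ^ ((1:ℝ)/4) := by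
        apply Real.rpow_le_rpow (by norm_num) (by exact_mod_cast hn) (by norm_num)
      have h162 : ((16 : ℝ)) ^ ((1:ℝ)/4) = 2 := by
        rw [show (16 : ℝ) = 2 ^ (4 : ℕ) by norm_num, ← Real.rpow_natCast 2 4,
          ← Real.rpow_mul (by norm_num)]
        norm_num
      linarith
    have h5 : (0 : ℝ) < (n : ℝ) ^ ((3:ℝ)/4) := Real.rpow_pos_of_pos hnpos _
    rw [e1, e2]
    nlinarith
  -- combine
  have hcast := hineq d
  have hcastR : ((d : ℝ) + 1) * n ≤ ((d : ℝ) + 1) ^ 2 * 2 ^ (d * d : ℕ) + 2 * m := by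
    exact_mod_cast hcast
  have hdn0 : (0 : ℝ) ≤ (d : ℝ) + 1 := by positivity
  have hstep : ((d : ℝ) + 1) ^ 2 * 2 ^ (d * d : ℕ) ≤ ((d : ℝ) + 1) * ((n : ℝ) / 2) := by
    have h1 : ((d : ℝ) + 1) * (2 : ℝ) ^ (d * d : ℕ) ≤ Real.sqrt n * (n : ℝ) ^ ((1:ℝ)/4) := by
      apply mul_le_mul key2 key1 (by positivity) (Real.sqrt_nonneg _)
    have h2 : ((d : ℝ) + 1) * (2 : ℝ) ^ (d * d : ℕ) ≤ (n : ℝ) / 2 := le_trans h1 key3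
    calc ((d : ℝ) + 1) ^ 2 * 2 ^ (d * d : ℕ)
        = ((d : ℝ) + 1) * (((d : ℝ) + 1) * 2 ^ (d * d : ℕ)) := by ring
      _ ≤ ((d : ℝ) + 1) * ((n : ℝ) / 2) := by
          apply mul_le_mul_of_nonneg_left h2 hdn0
  have hm : ((d : ℝ) + 1) * ((n : ℝ) / 2) ≤ 2 * m := by linarith
  have hfin : (R / 2) * ((n : ℝ) / 2) ≤ 2 * m := by
    apply le_trans _ hm
    apply mul_le_mul_of_nonneg_right (le_of_lt hd2) (by positivity)
  calc (1/8 : ℝ) * n * R = ((R / 2) * ((n : ℝ) / 2)) / 2 := by ring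
    _ ≤ (2 * m) / 2 := by linarith
    _ = m := by ring

end Aux

/-- for every `k ≥ 4` there is an edge-ordering `G_k` of `K_k` such that
every edge `ab` has common neighbors `v, w` with `l(av) < l(aw)` and `l(bv) > l(bw)`;
consequently `ssat_s(n, G_k) = Ω(n√(log n))`. -/
theorem stmt18 (k : ℕ) (hk : 4 ≤ k) :
    ∃ lG : Sym2 (Fin k) → ℝ,
      Set.InjOn lG (⊤ : SimpleGraph (Fin k)).edgeSet ∧
      (∀ a b : Fin k, a ≠ b → ∃ v w : Fin k,
        v ≠ a ∧ v ≠ b ∧ w ≠ a ∧ w ≠ b ∧ v ≠ w ∧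
        lG s(a, v) < lG s(a, w) ∧ lG s(b, w) < lG s(b, v)) ∧
      (∃ c : ℝ, 0 < c ∧ ∃ N : ℕ, ∀ n ≥ N,
        c * n * Real.sqrt (Real.log n) ≤ (ssatS (⊤ : SimpleGraph (Fin k)) lG n : ℝ)) := by
  classical
  obtain ⟨lG, hinj, hcross⟩ : ∃ lG : Sym2 (Fin k) → ℝ, Function.Injective lG ∧
      (∀ a b : Fin k, a ≠ b → ∃ v w : Fin k,
        v ≠ a ∧ v ≠ b ∧ w ≠ a ∧ w ≠ b ∧ v ≠ w ∧
        lG s(a, v) < lG s(a, w) ∧ lG s(b, w) < lG s(b, v)) := by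
    rcases eq_or_lt_of_le hk with h4 | h5
    · subst h4
      refine ⟨fun e => (F4 e : ℝ), ?_, ?_⟩
      · intro e₁ e₂ h
        have h' : (F4 e₁ : ℝ) = (F4 e₂ : ℝ) := h
        exact F4_inj e₁ e₂ (by exact_mod_cast h')
      · intro a b hab
        obtain ⟨v, w, h1, h2, h3, h4', h5', h6, h7⟩ := F4_cross a b hab
        exact ⟨v, w, h1, h2, h3, h4', h5',
          show (F4 s(a, v) : ℝ) < (F4 s(a, w) : ℝ) from Nat.cast_lt.mpr h6,
          show (F4 s(b, w) : ℝ) < (F4 s(b, v) : ℝ) from Nat.cast_lt.mpr h7⟩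
    · exact exists_lG_ge5 k (by omega)
  refine ⟨lG, hinj.injOn, hcross, 1/8, by norm_num, 16, ?_⟩
  intro n hn
  have hne : {m | ∃ (H : SimpleGraph (Fin n)) (lH : Sym2 (Fin n) → ℝ),
      Set.InjOn lH H.edgeSet ∧ SsatSSat H lH (⊤ : SimpleGraph (Fin k)) lG ∧
      H.edgeSet.ncard = m}.Nonempty := by
    refine ⟨(⊤ : SimpleGraph (Fin n)).edgeSet.ncard, ⊤, tieLabel n,
      (tieLabel_inj n).injOn, ?_, rfl⟩
    intro u v huv hnadj
    exact absurd ((SimpleGraph.top_adj u v).mpr huv) hnadj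
  have hmem := Nat.sInf_mem hne
  obtain ⟨H, lH, hlinj, hssat, hncard⟩ := hmem
  letI : DecidableRel H.Adj := Classical.decRel _
  have hc := cross_of_ssat lG hcross H lH hssat
  have hmain : ∀ d : ℕ, (d + 1) * n ≤ (d + 1) ^ 2 * 2 ^ (d * d)
      + 2 * (ssatS (⊤ : SimpleGraph (Fin k)) lG n) := by
    intro d
    have hm := main_count H lH hc d
    rw [Fintype.card_fin] at hm
    have hcard : H.edgeFinset.card = ssatS (⊤ : SimpleGraph (Fin k)) lG n := by
      have h1 : H.edgeSet.ncard = H.edgeFinset.card := by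
        rw [← SimpleGraph.coe_edgeFinset, Set.ncard_coe_finset]
      rw [← h1, hncard]
      rfl
    rw [hcard] at hm
    exact hm
  exact asymp n _ hn hmain
end
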